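/- arXiv:2604.27140 — 10 statements merged into one kernel-verified Lean document; each statement's English description precedes it below -/
import Mathlib

section
/- Let F be a bijection of a finite set X and let Σ ⊆ X. Suppose every point of Σ has a positive first-return time to Σ under F. If the induced first-return map on Σ is a single cycle and the sum over Σ of the first-return times equals |X|, then F is a single cycle on X. -/
/-!
The points `F^[j] w` with `w ∈ S` and `j < ℓ w` are pairwise distinct: two of them coinciding
would, after cancelling the injective `F^[j]`, exhibit an early return of some `w'` to `S`.
Since there are `∑ ℓ w = |X|` of them, they exhaust `X`, so every point is a forward
`F`-iterate of a point of `S`, hence (following the return map, which is a single cycle) of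
one fixed `w₀ ∈ S`. As `F` is a permutation of a finite set, forward reachability is symmetric.
-/

open Function Finset

namespace Function

variable {α : Type*}

theorem exists_iterate_iterate_eq_iterate (f : α → α) (ℓ : α → ℕ) (k : ℕ) (x : α) :
    ∃ n, (fun w => f^[ℓ w] w)^[k] x = f^[n] x := by
  induction k generalizing x with
  | zero => exact ⟨0, rfl⟩
  | succ k ih =>
    obtain ⟨n, hn⟩ := ih (f^[ℓ x] x)
    exact ⟨n + ℓ x, by rw [iterate_succ_apply, hn, iterate_add_apply]⟩

theorem Injective.exists_iterate_eq_of_iterate_eq [Finite α] {f : α → α} (hf : Injective f)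
    {x y : α} {a : ℕ} (h : f^[a] x = y) : ∃ k, f^[k] y = x := by
  obtain ⟨p, hp, hper⟩ := hf.mem_periodicPts x
  refine ⟨p * a - a, ?_⟩
  have hle : a ≤ p * a := Nat.le_mul_of_pos_left a hp
  rw [← h, ← iterate_add_apply, Nat.sub_add_cancel hle]
  exact (hper.mul_const a).eq

section Tower

variable {f : α → α} {S : Finset α} {ℓ : α → ℕ}

theorem Injective.eq_of_iterate_eq_of_forall_not_mem (hf : Injective f)
    (hmin : ∀ w ∈ S, ∀ k, 0 < k → k < ℓ w → f^[k] w ∉ S)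
    {w w' : α} {j j' : ℕ} (hw : w ∈ S) (hw' : w' ∈ S) (hj' : j' < ℓ w') (hle : j ≤ j')
    (h : f^[j] w = f^[j'] w') : j = j' ∧ w = w' := by
  have hcancel : w = f^[j' - j] w' := by
    apply hf.iterate j
    rw [h, ← iterate_add_apply, Nat.add_sub_cancel' hle]
  rcases Nat.eq_zero_or_pos (j' - j) with h0 | h0
  · exact ⟨by omega, by rwa [h0, iterate_zero_apply] at hcancel⟩
  · exact absurd (hcancel ▸ hw) (hmin w' hw' _ h0 (by omega))

theorem Injective.injOn_iterate_sigma (hf : Injective f)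
    (hmin : ∀ w ∈ S, ∀ k, 0 < k → k < ℓ w → f^[k] w ∉ S) :
    Set.InjOn (fun p : Σ _ : α, ℕ => f^[p.2] p.1) ↑(S.sigma fun w => range (ℓ w)) := by
  rintro ⟨w, j⟩ hp ⟨w', j'⟩ hq h
  simp only [coe_sigma, Set.mem_sigma_iff, mem_coe, mem_range] at hp hq
  obtain ⟨rfl, rfl⟩ | ⟨rfl, rfl⟩ := (le_total j j').imp
    (hf.eq_of_iterate_eq_of_forall_not_mem hmin hp.1 hq.1 hq.2 · h)
    (hf.eq_of_iterate_eq_of_forall_not_mem hmin hq.1 hp.1 hp.2 · h.symm) <;> rfl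

theorem Injective.exists_mem_iterate_eq [Fintype α] (hf : Injective f)
    (hmin : ∀ w ∈ S, ∀ k, 0 < k → k < ℓ w → f^[k] w ∉ S)
    (hsum : ∑ w ∈ S, ℓ w = Fintype.card α) (z : α) :
    ∃ w ∈ S, ∃ j, f^[j] w = z := by
  classical
  have hcard : ((S.sigma fun w => range (ℓ w)).image
      (fun p : Σ _ : α, ℕ => f^[p.2] p.1)).card = Fintype.card α := by
    rw [card_image_of_injOn (hf.injOn_iterate_sigma hmin), card_sigma]
    simpa using hsum
  obtain ⟨⟨w, j⟩, hp, hz⟩ := mem_image.mp (eq_univ_of_card _ hcard ▸ mem_univ z)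
  exact ⟨w, (mem_sigma.mp hp).1, j, hz⟩

end Tower

end Function

theorem splice_lemma_general {X : Type*} [Fintype X]
    (F : X → X) (hF : Function.Bijective F)
    (S : Finset X) (ℓ : X → ℕ)
    (hmin : ∀ w ∈ S, ∀ k, 0 < k → k < ℓ w → F^[k] w ∉ S)
    (hcycle : ∀ u ∈ S, ∀ v ∈ S, ∃ k : ℕ, (fun w => F^[ℓ w] w)^[k] u = v)
    (hsum : ∑ w ∈ S, ℓ w = Fintype.card X) :
    ∀ x y : X, ∃ k : ℕ, F^[k] x = y := by
  intro x y
  obtain ⟨w₀, hw₀, -⟩ := hF.1.exists_mem_iterate_eq hmin hsum x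
  have hreach (z : X) : ∃ n, F^[n] w₀ = z := by
    obtain ⟨w, hw, j, rfl⟩ := hF.1.exists_mem_iterate_eq hmin hsum z
    obtain ⟨k, hk⟩ := hcycle w₀ hw₀ w hw
    obtain ⟨n, hn⟩ := exists_iterate_iterate_eq_iterate F ℓ k w₀
    exact ⟨j + n, by rw [iterate_add_apply, ← hn, hk]⟩
  obtain ⟨a, ha⟩ := hreach x
  obtain ⟨b, rfl⟩ := hreach y
  obtain ⟨k, hk⟩ := hF.1.exists_iterate_eq_of_iterate_eq ha
  exact ⟨b + k, by rw [iterate_add_apply, hk]⟩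

/-- **Splice lemma.** If `F` is a bijection of a finite set `X`, every point of `Σ` has a
positive first-return time to `Σ`, the induced first-return map on `Σ` is a single cycle,
and the sum of the first-return times over `Σ` equals `|X|`, then `F` is a single cycle. -/
theorem splice_lemma {X : Type*} [Fintype X] [DecidableEq X]
    (F : X → X) (hF : Function.Bijective F)
    (S : Finset X) (ℓ : X → ℕ)
    (hpos : ∀ w ∈ S, 0 < ℓ w)
    (hret : ∀ w ∈ S, F^[ℓ w] w ∈ S)
    (hmin : ∀ w ∈ S, ∀ k, 0 < k → k < ℓ w → F^[k] w ∉ S)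
    (hcycle : ∀ u ∈ S, ∀ v ∈ S, ∃ k : ℕ, (fun w => F^[ℓ w] w)^[k] u = v)
    (hsum : ∑ w ∈ S, ℓ w = Fintype.card X) :
    ∀ x y : X, ∃ k : ℕ, F^[k] x = y :=
  splice_lemma_general F hF S ℓ hmin hcycle hsum
end

section
/- Define the selector p : {feasible zero-sets of A_m} → Z/5 by the table: p(∅)=0, p({0})=0, p({1})=0, p({2})=0, p({3})=4, p({4})=1, p({0,1})=0, p({0,2})=0, p({0,3})=2, p({0,4})=1, p({1,2})=4, p({1,3})=4, p({1,4})=1, p({2,3})=1, p({2,4})=3, p({3,4})=4, p({0,1,2})=4, p({0,1,3})=2, p({0,1,4})=1, p({0,2,3})=2, p({0,2,4})=3, p({0,3,4})=1, p({1,2,3})=1, p({1,2,4})=4, p({1,3,4})=4, p({2,3,4})=3, p({0,1,2,3,4})=0. For every odd m ≥ 3 and every y ∈ A_m, there is exactly one i ∈ Z/5 such that p(Z(y − q_i)) = i. -/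
def zeroSet {m : ℕ} (w : Fin 5 → ZMod m) : Finset (Fin 5) :=
  Finset.univ.filter (fun i => w i = 0)

def sel (Z : Finset (Fin 5)) : Fin 5 :=
  if Z = {3} then 4 else if Z = {4} then 1
  else if Z = {0,3} then 2 else if Z = {0,4} then 1
  else if Z = {1,2} then 4 else if Z = {1,3} then 4
  else if Z = {1,4} then 1 else if Z = {2,3} then 1
  else if Z = {2,4} then 3 else if Z = {3,4} then 4
  else if Z = {0,1,2} then 4 else if Z = {0,1,3} then 2
  else if Z = {0,1,4} then 1 else if Z = {0,2,3} then 2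
  else if Z = {0,2,4} then 3 else if Z = {0,3,4} then 1
  else if Z = {1,2,3} then 1 else if Z = {1,2,4} then 4
  else if Z = {1,3,4} then 4 else if Z = {2,3,4} then 3
  else 0

def eVec (m : ℕ) (i : Fin 5) : Fin 5 → ZMod m := fun j => if j = i then 1 else 0

def qVec (m : ℕ) (i : Fin 5) : Fin 5 → ZMod m :=
  fun j => (if j = i then 1 else 0) - (if j = (4 : Fin 5) then 1 else 0)

def Gmap (m : ℕ) (w : Fin 5 → ZMod m) : Fin 5 → ZMod m :=
  w + ![(-3 : ZMod m), 0, 0, 1, 1] + eVec m (sel (zeroSet w))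

def ZB (b : Fin 5 → Bool) : Finset (Fin 5) :=
  Finset.univ.filter (fun j => b j = true)

set_option maxRecDepth 100000 in
set_option synthInstance.maxSize 4000 in
set_option synthInstance.maxHeartbeats 1000000 in
set_option maxHeartbeats 2000000 in
lemma key : ∀ a0 a1 a2 a3 b0 b1 b2 b3 z4 n4 : Bool,
    ¬(a0 = true ∧ b0 = true) → ¬(a1 = true ∧ b1 = true) →
    ¬(a2 = true ∧ b2 = true) → ¬(a3 = true ∧ b3 = true) →
    ¬(z4 = true ∧ n4 = true) →
    ¬(a0 = true ∧ a1 = true ∧ a2 = true ∧ b3 = true ∧ z4 = true) →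
    ¬(a0 = true ∧ a1 = true ∧ a2 = true ∧ a3 = false ∧ b3 = false ∧ z4 = true) →
    ¬(a0 = true ∧ a1 = true ∧ b2 = true ∧ a3 = true ∧ z4 = true) →
    ¬(a0 = true ∧ a1 = true ∧ b2 = true ∧ a3 = true ∧ z4 = false ∧ n4 = false) →
    ¬(a0 = true ∧ b1 = true ∧ a2 = true ∧ b3 = true ∧ n4 = true) →
    ¬(a0 = true ∧ b1 = true ∧ b2 = true ∧ a3 = true ∧ n4 = true) →
    ¬(a0 = true ∧ b1 = true ∧ a2 = false ∧ b2 = false ∧ a3 = true ∧ n4 = true) →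
    ¬(a0 = true ∧ a1 = false ∧ b1 = false ∧ a2 = true ∧ b3 = true ∧ n4 = true) →
    ¬(b0 = true ∧ a1 = true ∧ a2 = true ∧ a3 = true ∧ z4 = true) →
    ¬(b0 = true ∧ a1 = true ∧ a2 = true ∧ a3 = true ∧ z4 = false ∧ n4 = false) →
    ¬(b0 = true ∧ a1 = true ∧ a2 = true ∧ b3 = true ∧ n4 = true) →
    ¬(b0 = true ∧ a1 = true ∧ a2 = true ∧ a3 = false ∧ b3 = false ∧ n4 = true) →
    ¬(b0 = true ∧ a1 = true ∧ b2 = true ∧ a3 = true ∧ n4 = true) →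
    ¬(b0 = true ∧ a1 = true ∧ a2 = false ∧ b2 = false ∧ a3 = true ∧ n4 = true) →
    ¬(b0 = true ∧ b1 = true ∧ a2 = true ∧ a3 = true ∧ n4 = true) →
    ¬(b0 = true ∧ a1 = false ∧ b1 = false ∧ a2 = true ∧ a3 = true ∧ n4 = true) →
    ∃ i : Fin 5,
      sel ((![ZB ![b0,a1,a2,a3,n4], ZB ![a0,b1,a2,a3,n4], ZB ![a0,a1,b2,a3,n4],
             ZB ![a0,a1,a2,b3,n4], ZB ![a0,a1,a2,a3,z4]] : Fin 5 → Finset (Fin 5)) i) = i ∧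
      ∀ j : Fin 5,
        sel ((![ZB ![b0,a1,a2,a3,n4], ZB ![a0,b1,a2,a3,n4], ZB ![a0,a1,b2,a3,n4],
             ZB ![a0,a1,a2,b3,n4], ZB ![a0,a1,a2,a3,z4]] : Fin 5 → Finset (Fin 5)) j) = j → j = i := by
  decide

/-- **Exact-cover certificate.** For every odd `m ≥ 3` and every `y` in the root flat,
there is exactly one direction `i ∈ ℤ/5` with `p(Z(y − q_i)) = i`. -/
theorem exact_cover (m : ℕ) (hm : 3 ≤ m) (hodd : Odd m)
    (y : Fin 5 → ZMod m) (hy : ∑ i, y i = 0) :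
    ∃! i : Fin 5, sel (zeroSet (y - qVec m i)) = i := by
  haveI : Fact (1 < m) := ⟨by omega⟩
  rw [Fin.sum_univ_five] at hy
  have hZ : ∀ i : Fin 5, zeroSet (y - qVec m i) =
      (![ZB ![decide (y 0 = 1), decide (y 1 = 0), decide (y 2 = 0), decide (y 3 = 0), decide (y 4 = -1)],
         ZB ![decide (y 0 = 0), decide (y 1 = 1), decide (y 2 = 0), decide (y 3 = 0), decide (y 4 = -1)],
         ZB ![decide (y 0 = 0), decide (y 1 = 0), decide (y 2 = 1), decide (y 3 = 0), decide (y 4 = -1)],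
         ZB ![decide (y 0 = 0), decide (y 1 = 0), decide (y 2 = 0), decide (y 3 = 1), decide (y 4 = -1)],
         ZB ![decide (y 0 = 0), decide (y 1 = 0), decide (y 2 = 0), decide (y 3 = 0), decide (y 4 = 0)]]
        : Fin 5 → Finset (Fin 5)) i := by
    intro i
    fin_cases i <;>
      · ext j
        fin_cases j <;>
          simp [zeroSet, ZB, qVec, Finset.mem_filter, Pi.sub_apply, sub_eq_zero,
            sub_zero, zero_sub, sub_self, decide_eq_true_eq]
  simp only [hZ]
  obtain ⟨i, hi, hu⟩ :=
    key (decide (y 0 = 0)) (decide (y 1 = 0)) (decide (y 2 = 0)) (decide (y 3 = 0))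
      (decide (y 0 = 1)) (decide (y 1 = 1)) (decide (y 2 = 1)) (decide (y 3 = 1))
      (decide (y 4 = 0)) (decide (y 4 = -1))
      (by simp only [decide_eq_true_eq]; rintro ⟨p, q⟩
          exact (one_ne_zero : (1 : ZMod m) ≠ 0) (by rw [p] at q; linear_combination -q))
      (by simp only [decide_eq_true_eq]; rintro ⟨p, q⟩
          exact (one_ne_zero : (1 : ZMod m) ≠ 0) (by rw [p] at q; linear_combination -q))
      (by simp only [decide_eq_true_eq]; rintro ⟨p, q⟩
          exact (one_ne_zero : (1 : ZMod m) ≠ 0) (by rw [p] at q; linear_combination -q))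
      (by simp only [decide_eq_true_eq]; rintro ⟨p, q⟩
          exact (one_ne_zero : (1 : ZMod m) ≠ 0) (by rw [p] at q; linear_combination -q))
      (by simp only [decide_eq_true_eq]; rintro ⟨p, q⟩
          exact (one_ne_zero : (1 : ZMod m) ≠ 0) (by rw [p] at q; linear_combination q))
      -- e1 : (z,z,z,o,z)
      (by simp only [decide_eq_true_eq]; rintro ⟨p0, p1, p2, p3, p4⟩
          exact (one_ne_zero : (1 : ZMod m) ≠ 0) (by linear_combination hy - p0 - p1 - p2 - p3 - p4))
      -- e2 : (z,z,z,x,z)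
      (by simp only [decide_eq_true_eq, decide_eq_false_iff_not]; rintro ⟨p0, p1, p2, p3, _, p4⟩
          exact p3 (by linear_combination hy - p0 - p1 - p2 - p4))
      -- e3 : (z,z,o,z,z)
      (by simp only [decide_eq_true_eq]; rintro ⟨p0, p1, p2, p3, p4⟩
          exact (one_ne_zero : (1 : ZMod m) ≠ 0) (by linear_combination hy - p0 - p1 - p2 - p3 - p4))
      -- e4 : (z,z,o,z,x)  forces y4 = -1
      (by simp only [decide_eq_true_eq, decide_eq_false_iff_not]; rintro ⟨p0, p1, p2, p3, _, p4⟩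
          exact p4 (by linear_combination hy - p0 - p1 - p2 - p3))
      -- e5 : (z,o,z,o,n)
      (by simp only [decide_eq_true_eq]; rintro ⟨p0, p1, p2, p3, p4⟩
          exact (one_ne_zero : (1 : ZMod m) ≠ 0) (by linear_combination hy - p0 - p1 - p2 - p3 - p4))
      -- e6 : (z,o,o,z,n)
      (by simp only [decide_eq_true_eq]; rintro ⟨p0, p1, p2, p3, p4⟩
          exact (one_ne_zero : (1 : ZMod m) ≠ 0) (by linear_combination hy - p0 - p1 - p2 - p3 - p4))
      -- e7 : (z,o,x,z,n)  forces y2 = 0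
      (by simp only [decide_eq_true_eq, decide_eq_false_iff_not]; rintro ⟨p0, p1, p2, _, p3, p4⟩
          exact p2 (by linear_combination hy - p0 - p1 - p3 - p4))
      -- e8 : (z,x,z,o,n)  forces y1 = 0
      (by simp only [decide_eq_true_eq, decide_eq_false_iff_not]; rintro ⟨p0, p1, _, p2, p3, p4⟩
          exact p1 (by linear_combination hy - p0 - p2 - p3 - p4))
      -- e9 : (o,z,z,z,z)
      (by simp only [decide_eq_true_eq]; rintro ⟨p0, p1, p2, p3, p4⟩
          exact (one_ne_zero : (1 : ZMod m) ≠ 0) (by linear_combination hy - p0 - p1 - p2 - p3 - p4))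
      -- e10 : (o,z,z,z,x)  forces y4 = -1
      (by simp only [decide_eq_true_eq, decide_eq_false_iff_not]; rintro ⟨p0, p1, p2, p3, _, p4⟩
          exact p4 (by linear_combination hy - p0 - p1 - p2 - p3))
      -- e11 : (o,z,z,o,n)
      (by simp only [decide_eq_true_eq]; rintro ⟨p0, p1, p2, p3, p4⟩
          exact (one_ne_zero : (1 : ZMod m) ≠ 0) (by linear_combination hy - p0 - p1 - p2 - p3 - p4))
      -- e12 : (o,z,z,x,n)  forces y3 = 0
      (by simp only [decide_eq_true_eq, decide_eq_false_iff_not]; rintro ⟨p0, p1, p2, p3, _, p4⟩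
          exact p3 (by linear_combination hy - p0 - p1 - p2 - p4))
      -- e13 : (o,z,o,z,n)
      (by simp only [decide_eq_true_eq]; rintro ⟨p0, p1, p2, p3, p4⟩
          exact (one_ne_zero : (1 : ZMod m) ≠ 0) (by linear_combination hy - p0 - p1 - p2 - p3 - p4))
      -- e14 : (o,z,x,z,n)  forces y2 = 0
      (by simp only [decide_eq_true_eq, decide_eq_false_iff_not]; rintro ⟨p0, p1, p2, _, p3, p4⟩
          exact p2 (by linear_combination hy - p0 - p1 - p3 - p4))
      -- e15 : (o,o,z,z,n)
      (by simp only [decide_eq_true_eq]; rintro ⟨p0, p1, p2, p3, p4⟩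
          exact (one_ne_zero : (1 : ZMod m) ≠ 0) (by linear_combination hy - p0 - p1 - p2 - p3 - p4))
      -- e16 : (o,x,z,z,n)  forces y1 = 0
      (by simp only [decide_eq_true_eq, decide_eq_false_iff_not]; rintro ⟨p0, p1, _, p2, p3, p4⟩
          exact p1 (by linear_combination hy - p0 - p2 - p3 - p4))
  exact ⟨i, hi, hu⟩
end

section
/- For every odd m ≥ 3, the map P : A_m → A_m defined by P(w) = w + q_{p(Z(w))} is a bijection, where p is the zero-set selector of the layer-1 table. -/
lemma key_s4 : ∀ (Zw Zv : Finset (Fin 5)), Zw.card ≠ 4 → Zv.card ≠ 4 → sel Zw ≠ sel Zv →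
    (∀ k : Fin 5, k ≠ sel Zw → k ≠ sel Zv → (k ∈ Zw ↔ k ∈ Zv)) →
    ¬(sel Zw ∈ Zw ∧ sel Zw ∈ Zv) → ¬(sel Zv ∈ Zw ∧ sel Zv ∈ Zv) → False := by decide

lemma card_ne_four {m : ℕ} (hm : 3 ≤ m) (w : Fin 5 → ZMod m) (hw : ∑ i, w i = 0) :
    (zeroSet w).card ≠ 4 := by
  intro hc
  have hcc : (zeroSet w)ᶜ.card = 1 := by
    have := Finset.card_compl (zeroSet w)
    simp [hc] at this
    omega
  obtain ⟨k, hk⟩ := Finset.card_eq_one.mp hcc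
  have hsplit : ∑ i, w i = ∑ i ∈ zeroSet w, w i + ∑ i ∈ (zeroSet w)ᶜ, w i := by
    rw [Finset.sum_add_sum_compl]
  have hz : ∑ i ∈ zeroSet w, w i = 0 := by
    apply Finset.sum_eq_zero
    intro i hi
    simpa [zeroSet] using hi
  have hwk : w k = 0 := by
    have : ∑ i ∈ (zeroSet w)ᶜ, w i = w k := by rw [hk, Finset.sum_singleton]
    rw [hsplit, hz, this, zero_add] at hw
    exact hw
  have hkmem : k ∈ zeroSet w := by simp [zeroSet, hwk]
  have : k ∈ (zeroSet w)ᶜ := by rw [hk]; exact Finset.mem_singleton_self k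
  simp [Finset.mem_compl] at this
  exact this hkmem

/-- **Matching table lemma.** For every odd `m ≥ 3`, the map `P(w) = w + q_{p(Z(w))}`
is a bijection of the root flat `A_m`. -/
theorem matching_bijection (m : ℕ) (hm : 3 ≤ m) (hodd : Odd m) :
    Set.BijOn (fun w => w + qVec m (sel (zeroSet w)))
      {w : Fin 5 → ZMod m | ∑ i, w i = 0} {w : Fin 5 → ZMod m | ∑ i, w i = 0} := by
  haveI : NeZero m := ⟨by omega⟩
  haveI : Fact (1 < m) := ⟨by omega⟩
  have hqsum : ∀ i : Fin 5, ∑ j, qVec m i j = 0 := by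
    intro i
    simp [qVec, Finset.sum_sub_distrib]
  have hmaps : Set.MapsTo (fun w => w + qVec m (sel (zeroSet w)))
      {w : Fin 5 → ZMod m | ∑ i, w i = 0} {w : Fin 5 → ZMod m | ∑ i, w i = 0} := by
    intro w hw
    simp only [Set.mem_setOf_eq] at hw ⊢
    simp [Finset.sum_add_distrib, hw, hqsum]
  have hinj : Set.InjOn (fun w => w + qVec m (sel (zeroSet w)))
      {w : Fin 5 → ZMod m | ∑ i, w i = 0} := by
    intro w hw v hv h
    simp only [Set.mem_setOf_eq] at hw hv
    set i := sel (zeroSet w) with hi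
    set j := sel (zeroSet v) with hj
    have hk : ∀ k, w k + qVec m i k = v k + qVec m j k := fun k => congrFun h k
    by_cases hij : i = j
    · funext k
      have := hk k
      rw [hij] at this
      exact add_right_cancel this
    · exfalso
      have hone : (1 : ZMod m) ≠ 0 := one_ne_zero
      apply key_s4 (zeroSet w) (zeroSet v) (card_ne_four hm w hw) (card_ne_four hm v hv)
        (by rw [← hi, ← hj]; exact hij)
      · intro k hki hkj
        rw [← hi] at hki; rw [← hj] at hkj
        have := hk k
        simp only [qVec, if_neg hki, if_neg hkj] at this
        have hwv : w k = v k := by linear_combination this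
        simp [zeroSet, hwv]
      · rw [← hi]
        rintro ⟨h1, h2⟩
        simp only [zeroSet, Finset.mem_filter] at h1 h2
        have := hk i
        simp only [qVec, h1.2, h2.2, if_neg hij, if_pos rfl, if_true] at this
        exact hone (by linear_combination this)
      · rw [← hj]
        rintro ⟨h1, h2⟩
        simp only [zeroSet, Finset.mem_filter] at h1 h2
        have := hk j
        simp only [qVec, h1.2, h2.2, if_neg (fun hh : j = i => hij hh.symm), if_pos rfl, if_true] at this
        exact hone (by linear_combination -this)
  exact (Set.Finite.injOn_iff_bijOn_of_mapsTo (Set.toFinite _) hmaps).mp hinj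
end

section
/- In A_m with m ≥ 3 odd, p(Z(w)) = 2 holds if and only if w_0 = 0, w_3 = 0 and w_4 ≠ 0; consequently the section Σ = {w ∈ A_m : p(Z(w)) = 2} equals {(0, a, b, 0, −a−b) : a, b ∈ Z/m, a + b ≠ 0} and has exactly m(m−1) elements. -/
lemma mem_zeroSet {m : ℕ} (w : Fin 5 → ZMod m) (i : Fin 5) :
    i ∈ zeroSet w ↔ w i = 0 := by simp [zeroSet]

lemma sel_eq_two_iff (Z : Finset (Fin 5)) :
    sel Z = 2 ↔ (Z = {0,3} ∨ Z = {0,1,3} ∨ Z = {0,2,3}) := by revert Z; decide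

lemma part1 {m : ℕ} (w : Fin 5 → ZMod m) (hw : (∑ i, w i) = 0) :
    sel (zeroSet w) = 2 ↔ w 0 = 0 ∧ w 3 = 0 ∧ w 4 ≠ 0 := by
  rw [Fin.sum_univ_five] at hw
  rw [sel_eq_two_iff]
  constructor
  · rintro (h | h | h) <;>
    · refine ⟨(mem_zeroSet w 0).1 ?_, (mem_zeroSet w 3).1 ?_, fun h4 => ?_⟩
      · rw [h]; decide
      · rw [h]; decide
      · have := (mem_zeroSet w 4).2 h4
        rw [h] at this; revert this; decide
  · rintro ⟨h0, h3, h4⟩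
    by_cases h1 : w 1 = 0 <;> by_cases h2 : w 2 = 0
    · exfalso; apply h4; rw [h0, h1, h2, h3] at hw; simpa using hw
    · right; left
      ext i; simp only [mem_zeroSet]
      fin_cases i <;> simp_all
    · right; right
      ext i; simp only [mem_zeroSet]
      fin_cases i <;> simp_all
    · left
      ext i; simp only [mem_zeroSet]
      fin_cases i <;> simp_all

/-- **The `p = 2` section.** In `A_m` with `m ≥ 3` odd, `p(Z(w)) = 2` iff
`w_0 = 0, w_3 = 0, w_4 ≠ 0`; the section equals `{(0,a,b,0,−a−b) : a+b ≠ 0}`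
and has exactly `m(m−1)` elements. -/
theorem section_p_eq_two (m : ℕ) (hm : 3 ≤ m) (hodd : Odd m) :
    (∀ w : Fin 5 → ZMod m, (∑ i, w i) = 0 →
        (sel (zeroSet w) = 2 ↔ w 0 = 0 ∧ w 3 = 0 ∧ w 4 ≠ 0)) ∧
    ({w : Fin 5 → ZMod m | (∑ i, w i) = 0 ∧ sel (zeroSet w) = 2} =
        {w : Fin 5 → ZMod m | ∃ a b : ZMod m, a + b ≠ 0 ∧ w = ![0, a, b, 0, -a - b]}) ∧
    Nat.card {w : Fin 5 → ZMod m | (∑ i, w i) = 0 ∧ sel (zeroSet w) = 2} = m * (m - 1) := by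
  haveI : NeZero m := ⟨by omega⟩
  have hset : ({w : Fin 5 → ZMod m | (∑ i, w i) = 0 ∧ sel (zeroSet w) = 2} =
      {w : Fin 5 → ZMod m | ∃ a b : ZMod m, a + b ≠ 0 ∧ w = ![0, a, b, 0, -a - b]}) := by
    ext w
    simp only [Set.mem_setOf_eq]
    constructor
    · rintro ⟨hs, h2⟩
      obtain ⟨h0, h3, h4⟩ := (part1 w hs).1 h2
      rw [Fin.sum_univ_five] at hs
      refine ⟨w 1, w 2, ?_, ?_⟩
      · intro hab
        apply h4
        rw [h0, h3] at hs
        have : w 4 = -(w 1 + w 2) := by linear_combination hs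
        rw [this, hab, neg_zero]
      · have h4eq : w 4 = -(w 1) - w 2 := by
          rw [h0, h3] at hs; linear_combination hs
        funext i
        fin_cases i <;> simp [h0, h3, h4eq]
    · rintro ⟨a, b, hab, rfl⟩
      have hs : (∑ i, (![0, a, b, 0, -a - b] : Fin 5 → ZMod m) i) = 0 := by
        rw [Fin.sum_univ_five]; show 0 + a + b + 0 + (-a - b) = 0; ring
      refine ⟨hs, (part1 _ hs).2 ⟨rfl, rfl, ?_⟩⟩
      show -a - b ≠ 0
      intro h
      apply hab
      linear_combination -h
  refine ⟨fun w hw => part1 w hw, hset, ?_⟩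
  rw [hset]
  have himg : {w : Fin 5 → ZMod m | ∃ a b : ZMod m, a + b ≠ 0 ∧ w = ![0, a, b, 0, -a - b]} =
      (fun p : ZMod m × ZMod m => (![0, p.1, p.2, 0, -p.1 - p.2] : Fin 5 → ZMod m)) ''
      {p : ZMod m × ZMod m | p.1 + p.2 ≠ 0} := by
    ext w
    simp only [Set.mem_setOf_eq, Set.mem_image, Prod.exists]
    constructor
    · rintro ⟨a, b, hab, rfl⟩; exact ⟨a, b, hab, rfl⟩
    · rintro ⟨a, b, hab, rfl⟩; exact ⟨a, b, hab, rfl⟩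
  rw [himg, Nat.card_coe_set_eq]
  have hinj : Function.Injective
      (fun p : ZMod m × ZMod m => (![0, p.1, p.2, 0, -p.1 - p.2] : Fin 5 → ZMod m)) := by
    rintro ⟨a, b⟩ ⟨c, d⟩ h
    have h1 := congrFun h 1
    have h2 := congrFun h 2
    simp at h1 h2
    simp [h1, h2]
  rw [Set.ncard_image_of_injective _ hinj]
  rw [show {p : ZMod m × ZMod m | p.1 + p.2 ≠ 0}.ncard =
      Nat.card {p : ZMod m × ZMod m // p.1 + p.2 ≠ 0} from
    (Nat.card_coe_set_eq _).symm]
  have e : {p : ZMod m × ZMod m // p.1 + p.2 ≠ 0} ≃ ZMod m × {c : ZMod m // c ≠ 0} :=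
    { toFun := fun p => (p.1.1, ⟨p.1.1 + p.1.2, p.2⟩)
      invFun := fun q => ⟨(q.1, q.2.1 - q.1), by simp [q.2.2]⟩
      left_inv := fun p => by ext <;> simp
      right_inv := fun q => by ext <;> simp }
  rw [Nat.card_congr e]
  rw [Nat.card_prod]
  have h1 : Nat.card (ZMod m) = m := Nat.card_zmod m
  have h2 : Nat.card {c : ZMod m // c ≠ 0} = m - 1 := by
    rw [Nat.card_eq_fintype_card, Fintype.card_subtype_compl, Fintype.card_subtype_eq,
      ZMod.card]
  rw [h1, h2]
end

section
/- Let m ≥ 5 be odd, and define G : A_m → A_m by G(w) = w + (−3, 0, 0, 1, 1) + e_{p(Z(w))} (coordinates mod m). For 0 ≤ b ≤ m−2 and a + b ≠ 0, write w(a,b) = (0, a, b, 0, −a−b) and s = a+b ∈ {1,…,m−1}; let h = (m−1)/2. Then G^m(w(a,b)) = (−2, a+1, b+1, 0, −s). -/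
/-- Auxiliary: selector value 0 when coordinates 2,3,4 are nonzero. -/
lemma selA {m : ℕ} (w : Fin 5 → ZMod m) (h2 : w 2 ≠ 0) (h3 : w 3 ≠ 0)
    (h4 : w 4 ≠ 0) : sel (zeroSet w) = 0 := by
  by_cases h0 : w 0 = 0 <;> by_cases h1 : w 1 = 0
  · have : zeroSet w = {0,1} := by
      ext i; fin_cases i <;> simp [zeroSet, h0, h1, h2, h3, h4]
    rw [this]; decide
  · have : zeroSet w = {0} := by
      ext i; fin_cases i <;> simp [zeroSet, h0, h1, h2, h3, h4]
    rw [this]; decide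
  · have : zeroSet w = {1} := by
      ext i; fin_cases i <;> simp [zeroSet, h0, h1, h2, h3, h4]
    rw [this]; decide
  · have : zeroSet w = ∅ := by
      ext i; fin_cases i <;> simp [zeroSet, h0, h1, h2, h3, h4]
    rw [this]; decide

/-- Auxiliary: selector value 1 when coordinate 4 is zero, 2,3 nonzero. -/
lemma selB {m : ℕ} (w : Fin 5 → ZMod m) (h2 : w 2 ≠ 0) (h3 : w 3 ≠ 0)
    (h4 : w 4 = 0) : sel (zeroSet w) = 1 := by
  by_cases h0 : w 0 = 0 <;> by_cases h1 : w 1 = 0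
  · have : zeroSet w = {0,1,4} := by
      ext i; fin_cases i <;> simp [zeroSet, h0, h1, h2, h3, h4]
    rw [this]; decide
  · have : zeroSet w = {0,4} := by
      ext i; fin_cases i <;> simp [zeroSet, h0, h1, h2, h3, h4]
    rw [this]; decide
  · have : zeroSet w = {1,4} := by
      ext i; fin_cases i <;> simp [zeroSet, h0, h1, h2, h3, h4]
    rw [this]; decide
  · have : zeroSet w = {4} := by
      ext i; fin_cases i <;> simp [zeroSet, h0, h1, h2, h3, h4]
    rw [this]; decide

/-- Auxiliary: selector value 2 when coordinates 0,3 are zero, 4 nonzero,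
and not both 1, 2 zero. -/
lemma selC {m : ℕ} (w : Fin 5 → ZMod m) (h0 : w 0 = 0) (h3 : w 3 = 0)
    (h4 : w 4 ≠ 0) (h12 : w 1 ≠ 0 ∨ w 2 ≠ 0) : sel (zeroSet w) = 2 := by
  by_cases h1 : w 1 = 0 <;> by_cases h2 : w 2 = 0
  · exact absurd h1 (h12.resolve_right (not_not_intro h2))
  · have : zeroSet w = {0,1,3} := by
      ext i; fin_cases i <;> simp [zeroSet, h0, h1, h2, h3, h4]
    rw [this]; decide
  · have : zeroSet w = {0,2,3} := by
      ext i; fin_cases i <;> simp [zeroSet, h0, h1, h2, h3, h4]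
    rw [this]; decide
  · have : zeroSet w = {0,3} := by
      ext i; fin_cases i <;> simp [zeroSet, h0, h1, h2, h3, h4]
    rw [this]; decide

/-- Explicit trajectory. -/
def Wfun (m : ℕ) (a b : ZMod m) (n t : ℕ) : Fin 5 → ZMod m :=
  if t = 0 then ![0, a, b, 0, -(a+b)]
  else ![-1 - 2*(t:ZMod m) - (if n < t then 1 else 0),
         a + (if n < t then 1 else 0), b + 1, (t:ZMod m), (t:ZMod m) - (a+b)]

lemma Gmap_apply {m : ℕ} (w : Fin 5 → ZMod m) (i : Fin 5) :
    Gmap m w i = w i + ![(-3 : ZMod m), 0, 0, 1, 1] i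
      + (if i = sel (zeroSet w) then 1 else 0) := rfl

/-- **First block from a normal row.** For odd `m ≥ 5`, `0 ≤ b ≤ m−2` (i.e. `b ≠ −1`)
and `s = a + b ≠ 0`, one has `G^m(w(a,b)) = (−2, a+1, b+1, 0, −s)`. -/
theorem first_block (m : ℕ) (hm : 5 ≤ m) (hodd : Odd m)
    (a b : ZMod m) (hb : b ≠ -1) (hs : a + b ≠ 0) :
    (Gmap m)^[m] ![0, a, b, 0, -(a + b)] = ![-2, a + 1, b + 1, 0, -(a + b)] := by
  haveI : NeZero m := ⟨by omega⟩
  set n : ℕ := (a + b).val with hn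
  have hcast : ((n : ℕ) : ZMod m) = a + b := by
    rw [hn, ZMod.natCast_val, ZMod.cast_id]
  have hn0 : n ≠ 0 := by
    intro h
    exact hs (by rw [← hcast, h, Nat.cast_zero])
  have hnm : n < m := ZMod.val_lt _
  have hb' : b + 1 ≠ 0 := by
    intro h; exact hb (by linear_combination h)
  have htne : ∀ t : ℕ, 0 < t → t < m → ((t : ℕ) : ZMod m) ≠ 0 := by
    intro t h1 h2 h
    rw [ZMod.natCast_eq_zero_iff] at h
    exact absurd (Nat.le_of_dvd h1 h) (by omega)
  have key : ∀ t : ℕ, t ≤ m → (Gmap m)^[t] ![0, a, b, 0, -(a + b)] = Wfun m a b n t := by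
    intro t
    induction t with
    | zero => intro _; simp [Wfun]
    | succ t ih =>
      intro ht
      rw [Function.iterate_succ_apply', ih (by omega)]
      rcases Nat.eq_zero_or_pos t with h0 | hpos
      · subst h0
        have w1 : (Wfun m a b n 0) 1 = a := rfl
        have w2 : (Wfun m a b n 0) 2 = b := rfl
        have w4 : (Wfun m a b n 0) 4 = -(a + b) := rfl
        have hsel : sel (zeroSet (Wfun m a b n 0)) = 2 := by
          apply selC
          · rfl
          · rfl
          · rw [w4]; exact neg_ne_zero.mpr hs
          · by_cases ha : a = 0
            · right; rw [w2]; intro hb0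
              exact hs (by rw [ha, hb0, add_zero])
            · left; rw [w1]; exact ha
        have h1 : ¬ (n < 1) := by omega
        funext i
        rw [Gmap_apply, hsel]
        fin_cases i <;> simp [Wfun, h1] <;> ring
      · have ht0 : t ≠ 0 := by omega
        have htm : t < m := by omega
        have ht3 : ((t : ℕ) : ZMod m) ≠ 0 := htne t hpos htm
        by_cases htn : t = n
        · -- the special step where coordinate 4 vanishes
          have hsel : sel (zeroSet (Wfun m a b n t)) = 1 := by
            apply selB
            · simpa [Wfun, ht0] using hb'
            · simpa [Wfun, ht0] using ht3
            · simp [Wfun, ht0, htn, hcast, hn0]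
          have e1 : ¬ (n < t) := by omega
          have e2 : n < t + 1 := by omega
          funext i
          rw [Gmap_apply, hsel]
          fin_cases i <;> simp [Wfun, ht0, e1, e2] <;> push_cast <;> ring
        · -- generic step: selector 0
          have h4 : ((t : ℕ) : ZMod m) - (a + b) ≠ 0 := by
            intro h
            have heq : ((t : ℕ) : ZMod m) = ((n : ℕ) : ZMod m) := by
              rw [hcast]; linear_combination h
            have := congrArg ZMod.val heq
            rw [ZMod.val_cast_of_lt htm, ZMod.val_cast_of_lt hnm] at this
            exact htn this
          have hsel : sel (zeroSet (Wfun m a b n t)) = 0 := by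
            apply selA
            · simpa [Wfun, ht0] using hb'
            · simpa [Wfun, ht0] using ht3
            · simpa [Wfun, ht0] using h4
          have e3 : (n < t + 1) = (n < t) := by
            simp only [eq_iff_iff]; omega
          funext i
          rw [Gmap_apply, hsel]
          fin_cases i <;> simp [Wfun, ht0, e3] <;> push_cast <;> ring
  rw [key m le_rfl]
  have hm0 : (m : ZMod m) = 0 := ZMod.natCast_self m
  have hmn : n < m := hnm
  have hmz : m ≠ 0 := by omega
  funext i
  fin_cases i <;> simp [Wfun, hmz, hmn, hm0] <;> ring
end

section
/- Let m ≥ 5 be odd and let G(w) = w + (−3,0,0,1,1) + e_{p(Z(w))} on A_m. Let Y = (x, y, B, 0, z) ∈ A_m with B ≠ 0 and Y not in the section Σ = {w : w_0 = 0, w_3 = 0, w_4 ≠ 0}. Then G^m(Y) = (x', y', B, 0, z') where (x',z') = (x−1, 0) if z = −1; (x',z') = (−1, 0) if x = 0 and z = 0; and (x',z') = (x−2, z+1) otherwise. Moreover y' = y in the first case and y' = y+1 in the other two cases. -/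
lemma sel0 : ∀ Z : Finset (Fin 5), 2 ∉ Z → 3 ∉ Z → 4 ∉ Z → sel Z = 0 := by decide
lemma sel4 : ∀ Z : Finset (Fin 5), 0 ∉ Z → 2 ∉ Z → 3 ∈ Z → sel Z = 4 := by decide
lemma sel1 : ∀ Z : Finset (Fin 5), 2 ∉ Z → 3 ∉ Z → 4 ∈ Z → sel Z = 1 := by decide
lemma sel1' : ∀ Z : Finset (Fin 5), 0 ∈ Z → 1 ∉ Z → 2 ∉ Z → 3 ∈ Z → 4 ∈ Z → sel Z = 1 := by decide

set_option linter.unnecessarySeqFocus false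

lemma step_generic {m : ℕ} (a y B c d : ZMod m) (hB : B ≠ 0) (hc : c ≠ 0) (hd : d ≠ 0) :
    Gmap m ![a, y, B, c, d] = ![a - 2, y, B, c + 1, d + 1] := by
  have hs : sel (zeroSet ![a, y, B, c, d]) = 0 := by
    apply sel0 <;> simp [mem_zeroSet, hB, hc, hd]
  funext j; fin_cases j <;> simp [Gmap, hs, eVec] <;> ring

lemma step_event {m : ℕ} (a y B c : ZMod m) (hB : B ≠ 0) (hc : c ≠ 0) :
    Gmap m ![a, y, B, c, 0] = ![a - 3, y + 1, B, c + 1, 1] := by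
  have hs : sel (zeroSet ![a, y, B, c, (0 : ZMod m)]) = 1 := by
    apply sel1 <;> simp [mem_zeroSet, hB, hc]
  funext j; fin_cases j <;> simp [Gmap, hs, eVec] <;> ring

lemma step_start {m : ℕ} (x y B z : ZMod m) (hx : x ≠ 0) (hB : B ≠ 0) :
    Gmap m ![x, y, B, 0, z] = ![x - 3, y, B, 1, z + 2] := by
  have hs : sel (zeroSet ![x, y, B, (0 : ZMod m), z]) = 4 := by
    apply sel4 <;> simp [mem_zeroSet, hx, hB]
  funext j; fin_cases j <;> simp [Gmap, hs, eVec] <;> ring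

lemma step_start0 {m : ℕ} (y B : ZMod m) (hy : y ≠ 0) (hB : B ≠ 0) :
    Gmap m ![0, y, B, 0, 0] = ![-3, y + 1, B, 1, 1] := by
  have hs : sel (zeroSet ![(0 : ZMod m), y, B, 0, 0]) = 1 := by
    apply sel1' <;> simp [mem_zeroSet, hy, hB]
  funext j; fin_cases j <;> simp [Gmap, hs, eVec] <;> ring

lemma iter_generic {m : ℕ} (k : ℕ) : ∀ (a y B c d : ZMod m), B ≠ 0 →
    (∀ j < k, c + (j : ZMod m) ≠ 0) → (∀ j < k, d + (j : ZMod m) ≠ 0) →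
    (Gmap m)^[k] ![a, y, B, c, d] = ![a - 2 * k, y, B, c + k, d + k] := by
  induction k with
  | zero => intro a y B c d _ _ _; simp
  | succ n ih =>
    intro a y B c d hB hc hd
    rw [Function.iterate_succ_apply]
    have h0c : c ≠ 0 := by simpa using hc 0 (Nat.succ_pos n)
    have h0d : d ≠ 0 := by simpa using hd 0 (Nat.succ_pos n)
    rw [step_generic a y B c d hB h0c h0d]
    rw [ih (a - 2) y B (c + 1) (d + 1) hB
      (fun j hj => fun h => hc (j + 1) (by omega) (by push_cast; linear_combination h))
      (fun j hj => fun h => hd (j + 1) (by omega) (by push_cast; linear_combination h))]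
    funext i; fin_cases i <;> simp <;> (push_cast; ring)

-- nonzeroness of small casts
lemma cast_ne_zero {m : ℕ} (hm : 0 < m) (j : ℕ) (h1 : 0 < j) (h2 : j < m) :
    (j : ZMod m) ≠ 0 := by
  have : NeZero m := ⟨by omega⟩
  rw [Ne, ZMod.natCast_eq_zero_iff]
  intro hdvd
  exact absurd (Nat.le_of_dvd h1 hdvd) (by omega)

lemma natCast_pred {m : ℕ} (hm : 1 ≤ m) : ((m - 1 : ℕ) : ZMod m) = -1 := by
  rw [Nat.cast_sub hm]
  simp

/-- **Normal-row block recurrence.** Let `Y = (x,y,B,0,z) ∈ A_m` with `B ≠ 0` and `Y`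
outside the section `Σ = {w : w_0 = 0, w_3 = 0, w_4 ≠ 0}`.  Then `G^m Y = (x',y',B,0,z')`
with `(x',z') = (x−1,0)` and `y' = y` if `z = −1`; `(x',z') = (−1,0)` and `y' = y+1`
if `x = 0` and `z = 0`; and `(x',z') = (x−2,z+1)` and `y' = y+1` otherwise. -/
theorem block_recurrence (m : ℕ) (hm : 5 ≤ m) (hodd : Odd m)
    (x y B z : ZMod m) (hroot : x + y + B + z = 0) (hB : B ≠ 0)
    (hnotSec : ¬(x = 0 ∧ z ≠ 0)) :
    (z = -1 → (Gmap m)^[m] ![x, y, B, 0, z] = ![x - 1, y, B, 0, 0]) ∧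
    (x = 0 → z = 0 → (Gmap m)^[m] ![x, y, B, 0, z] = ![-1, y + 1, B, 0, 0]) ∧
    (z ≠ -1 → ¬(x = 0 ∧ z = 0) →
      (Gmap m)^[m] ![x, y, B, 0, z] = ![x - 2, y + 1, B, 0, z + 1]) := by
  have hmpos : 0 < m := by omega
  have : NeZero m := ⟨by omega⟩
  have hone : (1 : ZMod m) ≠ 0 := by
    have := cast_ne_zero hmpos 1 one_pos (by omega); simpa using this
  refine ⟨?_, ?_, ?_⟩
  · -- z = -1 case
    intro hz
    subst hz
    have hzne : (-1 : ZMod m) ≠ 0 := fun h => hone (by linear_combination -h)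
    have hx : x ≠ 0 := fun h => hnotSec ⟨h, hzne⟩
    obtain ⟨n, rfl⟩ : ∃ n, m = n + 1 := ⟨m - 1, by omega⟩
    rw [Function.iterate_succ_apply, step_start x y B (-1) hx hB]
    rw [iter_generic n (x - 3) y B 1 (-1 + 2) hB
      (fun j hj h => cast_ne_zero hmpos (j + 1) (by omega) (by omega)
        (by push_cast; linear_combination h))
      (fun j hj h => cast_ne_zero hmpos (j + 1) (by omega) (by omega)
        (by push_cast; linear_combination h))]
    have hn : ((n : ℕ) : ZMod (n + 1)) = -1 := by
      have := natCast_pred (m := n + 1) (by omega); simpa using this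
    funext i
    fin_cases i
    · simp; linear_combination -2 * hn
    · simp
    · simp
    · simp; linear_combination hn
    · simp; linear_combination hn
  · -- x = 0, z = 0 case
    intro hx hz
    subst hx; subst hz
    have hy : y ≠ 0 := fun h => hB (by linear_combination hroot - h)
    obtain ⟨n, rfl⟩ : ∃ n, m = n + 1 := ⟨m - 1, by omega⟩
    rw [Function.iterate_succ_apply, step_start0 y B hy hB]
    rw [iter_generic n (-3) (y + 1) B 1 1 hB
      (fun j hj h => cast_ne_zero hmpos (j + 1) (by omega) (by omega)
        (by push_cast; linear_combination h))
      (fun j hj h => cast_ne_zero hmpos (j + 1) (by omega) (by omega)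
        (by push_cast; linear_combination h))]
    have hn : ((n : ℕ) : ZMod (n + 1)) = -1 := by
      have := natCast_pred (m := n + 1) (by omega); simpa using this
    funext i
    fin_cases i
    · simp; linear_combination -2 * hn
    · simp
    · simp
    · simp; linear_combination hn
    · simp; linear_combination hn
  · -- generic case
    intro hz1 hz0
    have hx : x ≠ 0 := by
      intro h
      have hz' : z = 0 := by
        by_contra hzz; exact hnotSec ⟨h, hzz⟩
      exact hz0 ⟨h, hz'⟩
    obtain ⟨u, hult, hu⟩ : ∃ u : ℕ, u < m ∧ ((u : ℕ) : ZMod m) = -(z + 2) :=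
      ⟨(-(z + 2)).val, ZMod.val_lt _, by simp [ZMod.natCast_val]⟩
    have hune : u ≠ m - 1 := by
      intro h
      apply hz1
      have h2 : ((u : ℕ) : ZMod m) = -1 := by rw [h]; exact natCast_pred (by omega)
      linear_combination hu - h2
    have hule : u ≤ m - 2 := by omega
    obtain ⟨r, hmr⟩ : ∃ r : ℕ, m = r + 1 + u + 1 := ⟨m - u - 2, by omega⟩
    have hrc : ((r : ℕ) : ZMod m) = z := by
      have h1 : ((r + 1 + u + 1 : ℕ) : ZMod m) = 0 := by rw [← hmr]; exact ZMod.natCast_self m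
      push_cast at h1
      linear_combination h1 - hu
    rw [show (Gmap m)^[m] = (Gmap m)^[r + 1 + u + 1] from by rw [← hmr]]
    rw [Function.iterate_succ_apply, step_start x y B z hx hB,
      Function.iterate_add_apply]
    rw [iter_generic u (x - 3) y B 1 (z + 2) hB
      (fun j hj h => cast_ne_zero hmpos (j + 1) (by omega) (by omega)
        (by push_cast; linear_combination h))
      (fun j hj h => by
        have hj' : ((j : ℕ) : ZMod m) = ((u : ℕ) : ZMod m) := by
          rw [hu]; linear_combination h
        have h2 := congrArg ZMod.val hj'
        rw [ZMod.val_cast_of_lt (by omega : j < m),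
          ZMod.val_cast_of_lt (by omega : u < m)] at h2
        omega)]
    rw [show z + 2 + ((u : ℕ) : ZMod m) = 0 from by rw [hu]; ring]
    rw [Function.iterate_succ_apply,
      step_event (x - 3 - 2 * (u : ZMod m)) y B (1 + (u : ZMod m)) hB
        (fun h => cast_ne_zero hmpos (u + 1) (by omega) (by omega)
          (by push_cast; linear_combination h))]
    rw [iter_generic r (x - 3 - 2 * (u : ZMod m) - 3) (y + 1) B (1 + (u : ZMod m) + 1) 1 hB
      (fun j hj h => cast_ne_zero hmpos (u + 2 + j) (by omega) (by omega)
        (by push_cast; linear_combination h))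
      (fun j hj h => cast_ne_zero hmpos (j + 1) (by omega) (by omega)
        (by push_cast; linear_combination h))]
    funext i
    fin_cases i
    · simp; linear_combination -2 * hu - 2 * hrc
    · simp
    · simp
    · simp; linear_combination hu + hrc
    · simp; linear_combination hrc
end

section
/- Let m ≥ 5 be odd, G(w) = w + (−3,0,0,1,1) + e_{p(Z(w))} on A_m, and Σ = {w ∈ A_m : w_0 = 0, w_3 = 0, w_4 ≠ 0}. For b = m−1 and a ∉ {0,1} (representative a ∈ {2,…,m−1}), the orbit of w(a, m−1) = (0, a, −1, 0, 1−a) first returns to Σ after exactly m−1 steps, at the point w(a, 0) = (0, a, 0, 0, −a). -/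
lemma zeroSet_eq {m : ℕ} (w : Fin 5 → ZMod m) (b0 b1 b2 b3 b4 : Prop)
    [Decidable b0] [Decidable b1] [Decidable b2] [Decidable b3] [Decidable b4]
    (h0 : w 0 = 0 ↔ b0) (h1 : w 1 = 0 ↔ b1) (h2 : w 2 = 0 ↔ b2)
    (h3 : w 3 = 0 ↔ b3) (h4 : w 4 = 0 ↔ b4) :
    zeroSet w = Finset.univ.filter
      (fun i : Fin 5 => if i = 0 then b0 else if i = 1 then b1 else if i = 2 then b2
        else if i = 3 then b3 else b4) := by
  unfold zeroSet
  ext i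
  fin_cases i <;> simp [h0, h1, h2, h3, h4]

lemma Gmap_eval {m : ℕ} (x0 x1 x3 x4 : ZMod m) (h1 : x1 ≠ 0) (h3 : x3 ≠ 0) :
    Gmap m ![x0, x1, 0, x3, x4] =
      if x4 = 0 then ![x0 - 3, x1, 0, x3 + 2, x4 + 1]
      else ![x0 - 2, x1, 0, x3 + 1, x4 + 1] := by
  have hs : sel (zeroSet ![x0, x1, 0, x3, x4]) = if x4 = 0 then 3 else 0 := by
    by_cases h0 : x0 = 0 <;> by_cases h4 : x4 = 0
    · have hz : zeroSet ![x0, x1, 0, x3, x4] = ({0, 2, 4} : Finset (Fin 5)) := by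
        unfold zeroSet; ext i; fin_cases i <;> simp [h0, h1, h3, h4]
      rw [hz]; simp [h4]; decide
    · have hz : zeroSet ![x0, x1, 0, x3, x4] = ({0, 2} : Finset (Fin 5)) := by
        unfold zeroSet; ext i; fin_cases i <;> simp [h0, h1, h3, h4]
      rw [hz]; simp [h4]; decide
    · have hz : zeroSet ![x0, x1, 0, x3, x4] = ({2, 4} : Finset (Fin 5)) := by
        unfold zeroSet; ext i; fin_cases i <;> simp [h0, h1, h3, h4]
      rw [hz]; simp [h4]; decide
    · have hz : zeroSet ![x0, x1, 0, x3, x4] = ({2} : Finset (Fin 5)) := by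
        unfold zeroSet; ext i; fin_cases i <;> simp [h0, h1, h3, h4]
      rw [hz]; simp [h4]; decide
  have hG : Gmap m ![x0, x1, 0, x3, x4] =
      ![x0, x1, 0, x3, x4] + ![(-3 : ZMod m), 0, 0, 1, 1]
        + eVec m (if x4 = 0 then 3 else 0) := by
    rw [Gmap, hs]
  rw [hG]
  by_cases h4 : x4 = 0 <;> simp only [h4, ite_true, ite_false] <;>
    (funext i; fin_cases i <;> simp [eVec] <;> ring)

/-- **Short last-row excursions.** For odd `m ≥ 5` and `a ∉ {0,1}`, the orbit of
`w(a, m−1) = (0, a, −1, 0, 1−a)` under `G` first returns to the section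
`Σ = {w : w_0 = 0, w_3 = 0, w_4 ≠ 0}` after exactly `m−1` steps, at `(0, a, 0, 0, −a)`. -/
theorem short_last_row (m : ℕ) (hm : 5 ≤ m) (hodd : Odd m)
    (a : ZMod m) (ha0 : a ≠ 0) (ha1 : a ≠ 1) :
    (Gmap m)^[m - 1] ![0, a, -1, 0, 1 - a] = ![0, a, 0, 0, -a] ∧
    (![0, a, 0, 0, -a] : Fin 5 → ZMod m) ∈
      {w : Fin 5 → ZMod m | w 0 = 0 ∧ w 3 = 0 ∧ w 4 ≠ 0} ∧
    (∀ k : ℕ, 0 < k → k < m - 1 →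
      (Gmap m)^[k] ![0, a, -1, 0, 1 - a] ∉
        {w : Fin 5 → ZMod m | w 0 = 0 ∧ w 3 = 0 ∧ w 4 ≠ 0}) := by
  haveI : NeZero m := ⟨by omega⟩
  haveI : Fact (1 < m) := ⟨by omega⟩
  have hcast : ∀ k : ℕ, 0 < k → k < m → ((k : ZMod m) ≠ 0) := by
    intro k hk1 hk2 h
    rw [ZMod.natCast_eq_zero_iff] at h
    have := Nat.le_of_dvd hk1 h
    omega
  have hva : ((a.val : ℕ) : ZMod m) = a := ZMod.natCast_zmod_val a
  have hv0 : a.val ≠ 0 := fun h => ha0 ((ZMod.val_eq_zero a).mp h)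
  have hv1 : a.val ≠ 1 := by
    intro h
    apply ha1
    rw [← hva, h, Nat.cast_one]
  have hva2 : 2 ≤ a.val := by omega
  have hvam : a.val < m := a.val_lt
  have hsub : ∀ k : ℕ, k < m → k ≠ a.val → ((k : ZMod m) - a ≠ 0) := by
    intro k hk hka h
    rw [sub_eq_zero] at h
    apply hka
    have : ((k : ZMod m)).val = k := ZMod.val_cast_of_lt hk
    rw [← this, h]
  -- Phase A : 1 ≤ k ≤ a.val - 1
  have pA : ∀ k : ℕ, 1 ≤ k → k ≤ a.val - 1 →
      (Gmap m)^[k] ![0, a, -1, 0, 1 - a] =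
        ![-(((2 * k + 1 : ℕ) : ZMod m)), a, 0, ((k : ℕ) : ZMod m),
          (((k + 1 : ℕ) : ZMod m)) - a] := by
    intro k hk1
    induction k, hk1 using Nat.le_induction with
    | base =>
      intro _
      rw [Function.iterate_one]
      have h2 : ((-1 : ZMod m)) ≠ 0 := neg_ne_zero.mpr one_ne_zero
      have h4 : (1 : ZMod m) - a ≠ 0 := sub_ne_zero.mpr (fun h => ha1 h.symm)
      have hz : zeroSet ![0, a, -1, 0, 1 - a] = ({0, 3} : Finset (Fin 5)) := by
        unfold zeroSet; ext i; fin_cases i <;> simp [ha0, h2, h4]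
      have hs : sel (zeroSet ![0, a, -1, 0, 1 - a]) = 2 := by rw [hz]; decide
      rw [Gmap, hs]
      funext i
      fin_cases i <;> simp [eVec] <;> push_cast <;> ring
    | succ k hk ih =>
      intro hk2
      have hk2' : k ≤ a.val - 1 := by omega
      rw [Function.iterate_succ_apply', ih hk2']
      rw [Gmap_eval _ _ _ _ ha0 (hcast k (by omega) (by omega))]
      rw [if_neg (hsub (k + 1) (by omega) (by omega))]
      funext i
      fin_cases i <;> simp <;> push_cast <;> ring
  -- Phase B : a.val ≤ k ≤ m - 1
  have pB : ∀ k : ℕ, a.val ≤ k → k ≤ m - 1 →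
      (Gmap m)^[k] ![0, a, -1, 0, 1 - a] =
        ![-(((2 * k + 2 : ℕ) : ZMod m)), a, 0, ((k + 1 : ℕ) : ZMod m),
          (((k + 1 : ℕ) : ZMod m)) - a] := by
    intro k hk1
    induction k, hk1 using Nat.le_induction with
    | base =>
      intro _
      have hstep : a.val = (a.val - 1) + 1 := by omega
      rw [hstep, Function.iterate_succ_apply', pA (a.val - 1) (by omega) le_rfl]
      have h4 : (((a.val - 1 + 1 : ℕ) : ZMod m)) - a = 0 := by
        rw [show a.val - 1 + 1 = a.val by omega, hva, sub_self]
      rw [Gmap_eval _ _ _ _ ha0 (hcast (a.val - 1) (by omega) (by omega))]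
      rw [if_pos h4]
      funext i
      fin_cases i <;> simp [h4] <;>
        simp only [Nat.cast_sub (show 1 ≤ a.val by omega), Nat.cast_one, hva] <;>
        push_cast <;> ring
    | succ k hk ih =>
      intro hk2
      have hk2' : k ≤ m - 1 := by omega
      rw [Function.iterate_succ_apply', ih hk2']
      rw [Gmap_eval _ _ _ _ ha0 (hcast (k + 1) (by omega) (by omega))]
      rw [if_neg (hsub (k + 1) (by omega) (by omega))]
      funext i
      fin_cases i <;> simp <;> push_cast <;> ring
  refine ⟨?_, ⟨rfl, rfl, neg_ne_zero.mpr ha0⟩, ?_⟩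
  · rw [pB (m - 1) (by omega) le_rfl]
    funext i
    fin_cases i <;> simp <;>
      simp only [Nat.cast_sub (show 1 ≤ m by omega), Nat.cast_one, ZMod.natCast_self] <;>
      ring
  · intro k hk1 hk2 hmem
    obtain ⟨_, h3, _⟩ := hmem
    rcases Nat.lt_or_ge k a.val with hka | hka
    · rw [pA k hk1 (by omega)] at h3
      exact hcast k hk1 (by omega) h3
    · rw [pB k hka (by omega)] at h3
      exact hcast (k + 1) (by omega) (by omega) h3
end

section
/- Let m ≥ 5 be odd, G(w) = w + (−3,0,0,1,1) + e_{p(Z(w))} on A_m, and Σ = {w ∈ A_m : w_0 = 0, w_3 = 0, w_4 ≠ 0}. The orbit of x* = (0, 0, −1, 0, 1) first returns to Σ after exactly m^3 − (m−1)(m−2) steps, at the point (0, 1, 0, 0, −1). -/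
/-!
After one step the orbit stays in the plane `w₂ = 0`; write its points as
`pt m b x y = (-(b + x + y), b, 0, x, y)`. Where `b, x, y ≠ 0`, `G` is the translation
`(b, x, y) ↦ (b, x + 1, y + 1)`, and the section is `{x = 0, b + y = 0, y ≠ 0}`.
Starting at `(b, 0, y)`, one block of `m - 1` steps (in which `x` goes once around `ℤ/m`,
jumping by `2` when `y` passes `0`) leads to `(b + 1, 0, y - 1)`; the block is one step longer
when `b = -1`, and takes `3m - 2` steps, ending at `y = -1`, when `y = 1`. Along the lap
`(-q, 0, -1) ↦ (-(q + 1), 0, -1)` the block starts are `(r - q, 0, -(r + 1))`, where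
`b + y = -(q + 1)`, and every other point has `x ≠ 0` or `y = 0`; so the section is first met
at `(1, 0, -1)`, after lap `m - 2`. Counting `2m - 1` steps to reach `(0, 0, -1)` and `m²` or
`m² + 1` steps per lap gives `m³ - (m - 1)(m - 2)`.
-/

open Finset

section ReachesAvoiding

variable {α : Type*} (f : α → α) (S : Set α)

def ReachesAvoiding (n : ℕ) (x y : α) : Prop :=
  f^[n] x = y ∧ ∀ t < n, f^[t] x ∉ S

variable {f S}

theorem ReachesAvoiding.one {x y : α} (hxy : f x = y) (hx : x ∉ S) :
    ReachesAvoiding f S 1 x y :=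
  ⟨hxy, fun t ht => by rwa [Nat.lt_one_iff.mp ht]⟩

theorem ReachesAvoiding.trans {a b : ℕ} {x y z : α} (h₁ : ReachesAvoiding f S a x y)
    (h₂ : ReachesAvoiding f S b y z) : ReachesAvoiding f S (a + b) x z := by
  refine ⟨by rw [add_comm, Function.iterate_add_apply, h₁.1, h₂.1], fun t ht => ?_⟩
  rcases lt_or_ge t a with hta | hta
  · exact h₁.2 t hta
  · obtain ⟨s, rfl⟩ := Nat.exists_eq_add_of_le' hta
    rw [Function.iterate_add_apply, h₁.1]
    exact h₂.2 s (by omega)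

theorem ReachesAvoiding.of_length_eq {a b : ℕ} {x y : α} (h : ReachesAvoiding f S a x y)
    (hab : a = b) : ReachesAvoiding f S b x y :=
  hab ▸ h

theorem reachesAvoiding_sum_range {u : ℕ → α} {len : ℕ → ℕ} (n : ℕ)
    (h : ∀ i < n, ReachesAvoiding f S (len i) (u i) (u (i + 1))) :
    ReachesAvoiding f S (∑ i ∈ range n, len i) (u 0) (u n) := by
  induction n with
  | zero => exact ⟨rfl, fun t ht => absurd ht (Nat.not_lt_zero t)⟩
  | succ n ih =>
    rw [sum_range_succ]
    exact (ih fun i hi => h i (by omega)).trans (h n (by omega))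

theorem reachesAvoiding_of_step {u : ℕ → α} (n : ℕ) (hstep : ∀ i < n, f (u i) = u (i + 1))
    (hS : ∀ i < n, u i ∉ S) : ReachesAvoiding f S n (u 0) (u n) := by
  simpa using reachesAvoiding_sum_range (len := fun _ => 1) n
    fun i hi => ReachesAvoiding.one (hstep i hi) (hS i hi)

theorem ReachesAvoiding.iterate_succ {n : ℕ} {x y : α} (h : ReachesAvoiding f S n (f x) y) :
    f^[n + 1] x = y ∧ ∀ k, 0 < k → k < n + 1 → f^[k] x ∉ S := by
  refine ⟨h.1, fun k hk hkn => ?_⟩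
  obtain ⟨t, rfl⟩ : ∃ t, k = t + 1 := ⟨k - 1, by omega⟩
  exact h.2 t (by omega)

end ReachesAvoiding

variable {m : ℕ}

def pt (m : ℕ) (b x y : ZMod m) : Fin 5 → ZMod m := ![-(b + x + y), b, 0, x, y]

def returnSection (m : ℕ) : Set (Fin 5 → ZMod m) := {w | w 0 = 0 ∧ w 3 = 0 ∧ w 4 ≠ 0}

theorem pt_mem_returnSection_iff {b x y : ZMod m} :
    pt m b x y ∈ returnSection m ↔ b + x + y = 0 ∧ x = 0 ∧ y ≠ 0 := by
  simp [pt, returnSection, -neg_add_rev]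

-- Makes `sel ∘ zeroSet` on the plane a function of four booleans, which `decide` evaluates.
def zeroPattern (c₀ c₁ c₃ c₄ : Bool) : Finset (Fin 5) :=
  univ.filter fun i => ![c₀, c₁, true, c₃, c₄] i = true

theorem zeroSet_pt (b x y : ZMod m) :
    zeroSet (pt m b x y) =
      zeroPattern (decide (b + x + y = 0)) (decide (b = 0)) (decide (x = 0)) (decide (y = 0)) := by
  ext i
  simp only [zeroSet, zeroPattern, mem_filter, mem_univ, true_and]
  fin_cases i <;> simp [pt, -neg_add_rev]

theorem pt_add_eVec_zero (b x y : ZMod m) :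
    pt m b x y + ![-3, 0, 0, 1, 1] + eVec m 0 = pt m b (x + 1) (y + 1) := by
  funext i; fin_cases i <;> simp [pt, eVec]; ring

theorem pt_add_eVec_one (b x y : ZMod m) :
    pt m b x y + ![-3, 0, 0, 1, 1] + eVec m 1 = pt m (b + 1) (x + 1) (y + 1) := by
  funext i; fin_cases i <;> simp [pt, eVec]; ring

theorem pt_add_eVec_three (b x y : ZMod m) :
    pt m b x y + ![-3, 0, 0, 1, 1] + eVec m 3 = pt m b (x + 2) (y + 1) := by
  funext i; fin_cases i <;> simp [pt, eVec] <;> ring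

theorem pt_add_eVec_four (b x y : ZMod m) :
    pt m b x y + ![-3, 0, 0, 1, 1] + eVec m 4 = pt m b (x + 1) (y + 2) := by
  funext i; fin_cases i <;> simp [pt, eVec] <;> ring

theorem Gmap_pt_of_ne_zero {b x y : ZMod m} (hb : b ≠ 0) (hx : x ≠ 0) (hy : y ≠ 0) :
    Gmap m (pt m b x y) = pt m b (x + 1) (y + 1) := by
  have hsel : ∀ c, sel (zeroPattern c false false false) = 0 := by decide
  rw [Gmap, zeroSet_pt, decide_eq_false hb, decide_eq_false hx, decide_eq_false hy, hsel,
    pt_add_eVec_zero]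

theorem Gmap_pt_y_zero {b x : ZMod m} (hb : b ≠ 0) :
    Gmap m (pt m b x 0) = pt m b (x + 2) 1 := by
  have hsel : ∀ c₀ c₃, (c₀ && c₃) = false → sel (zeroPattern c₀ false c₃ true) = 3 := by decide
  rw [Gmap, zeroSet_pt, decide_eq_false hb, decide_eq_true rfl, hsel, pt_add_eVec_three, zero_add]
  by_cases hx : x = 0 <;> simp [hx, hb]

theorem Gmap_pt_x_zero {b y : ZMod m} (hy : y ≠ 0) (hby : b + y ≠ 0) :
    Gmap m (pt m b 0 y) = pt m (b + 1) 1 (y + 1) := by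
  have hsel : ∀ c₁, sel (zeroPattern false c₁ true false) = 1 := by decide
  rw [Gmap, zeroSet_pt, add_zero, decide_eq_false hby, decide_eq_true rfl, decide_eq_false hy,
    hsel, pt_add_eVec_one, zero_add]

theorem Gmap_pt_b_zero {x y : ZMod m} (hx : x ≠ 0) :
    Gmap m (pt m 0 x y) = pt m 0 (x + 1) (y + 2) := by
  have hsel : ∀ c₀ c₄, (c₀ && c₄) = false → sel (zeroPattern c₀ true false c₄) = 4 := by decide
  rw [Gmap, zeroSet_pt, decide_eq_true rfl, decide_eq_false hx, hsel, pt_add_eVec_four]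
  by_cases hy : y = 0 <;> simp [hx, hy]

theorem Gmap_pt_zero : Gmap m (pt m 0 0 0) = pt m 0 1 1 := by
  have hsel : sel (zeroPattern true true true true) = 0 := by decide
  simp only [Gmap, zeroSet_pt, add_zero, decide_true, hsel, pt_add_eVec_zero, zero_add]

theorem Gmap_start [NeZero (1 : ZMod m)] : Gmap m ![0, 0, -1, 0, 1] = pt m 0 1 2 := by
  have hZ : zeroSet (![0, 0, -1, 0, 1] : Fin 5 → ZMod m) = {0, 1, 3} := by
    ext i; fin_cases i <;> simp [zeroSet]
  rw [Gmap, hZ]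
  have hsel : sel {0, 1, 3} = 2 := by decide
  rw [hsel]
  funext i; fin_cases i <;> simp [pt, eVec] <;> ring

theorem natCast_ne_zero_of_lt {a : ℕ} (h0 : 0 < a) (h : a < m) : (a : ZMod m) ≠ 0 := by
  rw [Ne, ZMod.natCast_eq_zero_iff]
  exact Nat.not_dvd_of_pos_of_lt h0 h

theorem natCast_eq_zero_of_eq {a : ℕ} (h : a = m) : (a : ZMod m) = 0 := by
  subst h
  exact ZMod.natCast_self a

local notation "Reaches" => ReachesAvoiding (Gmap m) (returnSection m)

theorem reachesAvoiding_run {b x y x' y' : ZMod m} (k : ℕ) (hb : b ≠ 0)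
    (hx : ∀ i < k, x + i ≠ 0) (hy : ∀ i < k, y + i ≠ 0) (hx' : x + k = x') (hy' : y + k = y') :
    Reaches k (pt m b x y) (pt m b x' y') := by
  subst hx' hy'
  simpa using reachesAvoiding_of_step (u := fun i : ℕ => pt m b (x + i) (y + i)) k
    (fun i hi => by simp only [Gmap_pt_of_ne_zero hb (hx i hi) (hy i hi), Nat.cast_succ, add_assoc])
    (fun i hi => fun h => hx i hi (pt_mem_returnSection_iff.mp h).2.1)

theorem reachesAvoiding_run_b_zero {x y x' y' : ZMod m} (k : ℕ)
    (hx : ∀ i < k, x + i ≠ 0) (hx' : x + k = x') (hy' : y + 2 * k = y') :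
    Reaches k (pt m 0 x y) (pt m 0 x' y') := by
  subst hx' hy'
  simpa using reachesAvoiding_of_step (u := fun i : ℕ => pt m 0 (x + i) (y + 2 * i)) k
    (fun i hi => by simp only [Gmap_pt_b_zero (hx i hi), Nat.cast_succ]; ring_nf)
    (fun i hi => fun h => hx i hi (pt_mem_returnSection_iff.mp h).2.1)

theorem reachesAvoiding_x_zero {b y b' y' : ZMod m} (hy : y ≠ 0) (hby : b + y ≠ 0)
    (hb' : b + 1 = b') (hy' : y + 1 = y') :
    Reaches 1 (pt m b 0 y) (pt m b' 1 y') := by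
  subst hb' hy'
  exact .one (Gmap_pt_x_zero hy hby) fun h => hby (by simpa using (pt_mem_returnSection_iff.mp h).1)

theorem reachesAvoiding_y_zero {b x x' : ZMod m} (hb : b ≠ 0) (hx' : x + 2 = x') :
    Reaches 1 (pt m b x 0) (pt m b x' 1) := by
  subst hx'
  exact .one (Gmap_pt_y_zero hb) fun h => (pt_mem_returnSection_iff.mp h).2.2 rfl

theorem reachesAvoiding_prelude [NeZero m] :
    Reaches (2 * m - 1) (pt m 0 1 2) (pt m 0 0 (-1)) := by
  obtain ⟨M, hM⟩ : ∃ M, M + 1 = m := ⟨m - 1, Nat.succ_pred_eq_of_ne_zero (NeZero.ne m)⟩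
  have hm0 : (M + 1 : ZMod m) = 0 := by exact_mod_cast natCast_eq_zero_of_eq hM
  have hx : ∀ i < M, (1 : ZMod m) + i ≠ 0 := fun i hi => by
    exact_mod_cast natCast_ne_zero_of_lt (a := 1 + i) (by omega) (by omega)
  have h₁ := reachesAvoiding_run_b_zero (y := 2) (x' := 0) (y' := 0) M hx
    (by linear_combination hm0) (by linear_combination 2 * hm0)
  have h₂ : Reaches 1 (pt m 0 0 0) (pt m 0 1 1) :=
    .one Gmap_pt_zero fun h => (pt_mem_returnSection_iff.mp h).2.2 rfl
  have h₃ := reachesAvoiding_run_b_zero (y := 1) (x' := 0) (y' := -1) M hx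
    (by linear_combination hm0) (by linear_combination 2 * hm0)
  exact (h₁.trans (h₂.trans h₃)).of_length_eq (by omega)

theorem reachesAvoiding_block {b : ZMod m} {r : ℕ} (hr : r + 3 ≤ m) (hb : b + 1 ≠ 0)
    (hbr : b - (r + 1) ≠ 0) :
    Reaches (m - 1) (pt m b 0 (-(r + 1))) (pt m (b + 1) 0 (-(r + 2))) := by
  obtain ⟨J, hJ⟩ : ∃ J, J + r + 3 = m := ⟨m - (r + 3), by omega⟩
  have hm0 : (J + r + 3 : ZMod m) = 0 := by exact_mod_cast natCast_eq_zero_of_eq hJ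
  have h₁ := reachesAvoiding_x_zero (b := b) (y := -((r : ZMod m) + 1))
    (y' := (J : ZMod m) + 3)
    (neg_ne_zero.mpr (by
      exact_mod_cast natCast_ne_zero_of_lt (a := r + 1) (by omega) (by omega)))
    (fun h => hbr (by linear_combination h)) rfl (by linear_combination -hm0)
  have h₂ := reachesAvoiding_run (x := 1) (y := (J : ZMod m) + 3) (x' := (r : ZMod m) + 1)
    (y' := 0) r hb
    (fun i hi => by exact_mod_cast natCast_ne_zero_of_lt (a := 1 + i) (by omega) (by omega))
    (fun i hi => by exact_mod_cast natCast_ne_zero_of_lt (a := J + 3 + i) (by omega) (by omega))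
    (by ring) (by linear_combination hm0)
  have h₃ := reachesAvoiding_y_zero (x := (r : ZMod m) + 1) (x' := (r : ZMod m) + 3) hb (by ring)
  have h₄ := reachesAvoiding_run (x := (r : ZMod m) + 3) (y := 1) (x' := 0)
    (y' := -((r : ZMod m) + 2)) J hb
    (fun i hi => by exact_mod_cast natCast_ne_zero_of_lt (a := r + 3 + i) (by omega) (by omega))
    (fun i hi => by exact_mod_cast natCast_ne_zero_of_lt (a := 1 + i) (by omega) (by omega))
    (by linear_combination hm0) (by linear_combination hm0)
  exact (h₁.trans (h₂.trans (h₃.trans h₄))).of_length_eq (by omega)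

theorem reachesAvoiding_block_b_neg_one [NeZero m] {y : ZMod m} (hy : y ≠ 0)
    (hy1 : y - 1 ≠ 0) : Reaches m (pt m (-1) 0 y) (pt m 0 0 (y - 1)) := by
  obtain ⟨M, hM⟩ : ∃ M, M + 1 = m := ⟨m - 1, Nat.succ_pred_eq_of_ne_zero (NeZero.ne m)⟩
  have hm0 : (M + 1 : ZMod m) = 0 := by exact_mod_cast natCast_eq_zero_of_eq hM
  have h₁ := reachesAvoiding_x_zero (b := -1) (y := y) (b' := 0) (y' := y + 1) hy
    (fun h => hy1 (by linear_combination h)) (by ring) rfl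
  have h₂ := reachesAvoiding_run_b_zero (x := 1) (y := y + 1) (x' := 0) (y' := y - 1) M
    (fun i hi => by exact_mod_cast natCast_ne_zero_of_lt (a := 1 + i) (by omega) (by omega))
    (by linear_combination hm0) (by linear_combination 2 * hm0)
  exact (h₁.trans h₂).of_length_eq (by omega)

theorem reachesAvoiding_block_y_one {b : ZMod m} (hm : 2 ≤ m) (hb : b + 1 ≠ 0) :
    Reaches (3 * m - 2) (pt m b 0 1) (pt m (b + 1) 0 (-1)) := by
  obtain ⟨K, hK⟩ : ∃ K, K + 2 = m := ⟨m - 2, by omega⟩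
  have hm0 : (K + 2 : ZMod m) = 0 := by exact_mod_cast natCast_eq_zero_of_eq hK
  have h₁ := reachesAvoiding_x_zero (b := b) (y := 1) (b' := b + 1) (y' := 2)
    (by exact_mod_cast natCast_ne_zero_of_lt (a := 1) (by omega) (by omega)) hb rfl (by norm_num)
  have h₂ := reachesAvoiding_run (x := 1) (y := 2) (x' := (K : ZMod m) + 1) (y' := 0) K hb
    (fun i hi => by exact_mod_cast natCast_ne_zero_of_lt (a := 1 + i) (by omega) (by omega))
    (fun i hi => by exact_mod_cast natCast_ne_zero_of_lt (a := 2 + i) (by omega) (by omega))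
    (by ring) (by linear_combination hm0)
  have h₃ := reachesAvoiding_y_zero (x := (K : ZMod m) + 1) (x' := 1) hb (by linear_combination hm0)
  have h₄ := reachesAvoiding_run (x := 1) (y := 1) (x' := 0) (y' := 0) (K + 1) hb
    (fun i hi => by exact_mod_cast natCast_ne_zero_of_lt (a := 1 + i) (by omega) (by omega))
    (fun i hi => by exact_mod_cast natCast_ne_zero_of_lt (a := 1 + i) (by omega) (by omega))
    (by push_cast; linear_combination hm0) (by push_cast; linear_combination hm0)
  have h₅ := reachesAvoiding_y_zero (x := 0) (x' := 2) hb (by ring)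
  have h₆ := reachesAvoiding_run (x := 2) (y := 1) (x' := 0) (y' := -1) K hb
    (fun i hi => by exact_mod_cast natCast_ne_zero_of_lt (a := 2 + i) (by omega) (by omega))
    (fun i hi => by exact_mod_cast natCast_ne_zero_of_lt (a := 1 + i) (by omega) (by omega))
    (by linear_combination hm0) (by linear_combination hm0)
  exact (h₁.trans (h₂.trans (h₃.trans (h₄.trans (h₅.trans h₆))))).of_length_eq (by omega)

theorem natCast_sub_natCast_ne_zero {a c : ℕ} (ha : a < m) (hc : c < m) (hac : a ≠ c) :
    (a : ZMod m) - c ≠ 0 := by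
  rw [sub_ne_zero]
  intro h
  apply hac
  rw [← ZMod.val_natCast_of_lt ha, ← ZMod.val_natCast_of_lt hc, h]

-- Block `r` of lap `q` starts at `b = r - q`, so it is the longer one exactly when `r + 1 = q`.
def blockLen (m q r : ℕ) : ℕ := if r + 1 = q then m else m - 1

def lapLen (m q : ℕ) : ℕ := ∑ r ∈ range (m - 2), blockLen m q r + (3 * m - 2)

theorem reachesAvoiding_lap {q : ℕ} (hq : q + 2 ≤ m) :
    Reaches (lapLen m q) (pt m (-q) 0 (-1)) (pt m (-((q + 1 : ℕ) : ZMod m)) 0 (-1)) := by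
  have : NeZero m := ⟨by omega⟩
  have hq1 : (q : ZMod m) + 1 ≠ 0 := by
    exact_mod_cast natCast_ne_zero_of_lt (a := q + 1) (by omega) (by omega)
  set u : ℕ → Fin 5 → ZMod m := fun r => pt m (r - q) 0 (-(r + 1))
  have hblock : ∀ r < m - 2, Reaches (blockLen m q r) (u r) (u (r + 1)) := by
    intro r hr
    have hr1 : (r : ZMod m) + 1 ≠ 0 := by
      exact_mod_cast natCast_ne_zero_of_lt (a := r + 1) (by omega) (by omega)
    have hr2 : (r : ZMod m) + 2 ≠ 0 := by
      exact_mod_cast natCast_ne_zero_of_lt (a := r + 2) (by omega) (by omega)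
    rw [blockLen]
    split_ifs with hrq
    · subst hrq
      convert reachesAvoiding_block_b_neg_one (y := -((r : ZMod m) + 1)) (neg_ne_zero.mpr hr1)
        (fun h => hr2 (by linear_combination -h)) using 2 <;> push_cast <;> ring
    · have hb : (r : ZMod m) - q + 1 ≠ 0 := by
        have := natCast_sub_natCast_ne_zero (m := m) (a := r + 1) (c := q) (by omega) (by omega) hrq
        push_cast at this
        exact fun h => this (by linear_combination h)
      convert reachesAvoiding_block (r := r) (by omega) hb
        (fun h => hq1 (by linear_combination -h)) using 2 <;> push_cast <;> ring
  have h2 : ((m - 2 : ℕ) : ZMod m) + 2 = 0 := by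
    exact_mod_cast natCast_eq_zero_of_eq (a := m - 2 + 2) (by omega)
  have hchain := reachesAvoiding_sum_range (m - 2) hblock
  have hlast := reachesAvoiding_block_y_one (b := ((m - 2 : ℕ) : ZMod m) - (q : ZMod m)) (by omega)
    (fun h => hq1 (by linear_combination h2 - h))
  rw [show u 0 = pt m (-q) 0 (-1) by simp [u],
    show u (m - 2) = pt m (((m - 2 : ℕ) : ZMod m) - q) 0 1 by
      simp only [u, show -(((m - 2 : ℕ) : ZMod m) + 1) = 1 by linear_combination -h2]] at hchain
  rw [show ((m - 2 : ℕ) : ZMod m) - q + 1 = -((q + 1 : ℕ) : ZMod m) by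
    push_cast; linear_combination h2] at hlast
  exact hchain.trans hlast

theorem reachesAvoiding_laps [NeZero m] :
    Reaches (∑ q ∈ range (m - 1), lapLen m q) (pt m 0 0 (-1)) (pt m 1 0 (-1)) := by
  have hm1 : ((m - 1 : ℕ) : ZMod m) + 1 = 0 := by
    exact_mod_cast natCast_eq_zero_of_eq (a := m - 1 + 1)
      (Nat.succ_pred_eq_of_ne_zero (NeZero.ne m))
  have h := reachesAvoiding_sum_range (u := fun q => pt m (-q) 0 (-1)) (m - 1)
    fun q hq => reachesAvoiding_lap (by omega)
  simp only [Nat.cast_zero, neg_zero] at h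
  rwa [show -((m - 1 : ℕ) : ZMod m) = 1 by linear_combination -hm1] at h

theorem sum_lapLen (hm : 2 ≤ m) :
    ∑ q ∈ range (m - 1), lapLen m q = (m - 1) * m ^ 2 + (m - 2) := by
  have hblock (q r : ℕ) : blockLen m q r = (m - 1) + if r + 1 = q then 1 else 0 := by
    unfold blockLen; split_ifs <;> omega
  have hcount :
      ∑ q ∈ range (m - 1), ∑ r ∈ range (m - 2), (if r + 1 = q then 1 else 0) = m - 2 := by
    rw [sum_comm]
    simp only [sum_ite_eq, mem_range]
    rw [sum_congr rfl fun r hr => if_pos (by have := mem_range.mp hr; omega)]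
    simp
  simp only [lapLen, hblock, sum_add_distrib, sum_const, card_range, smul_eq_mul, hcount]
  obtain ⟨k, rfl⟩ : ∃ k, m = k + 2 := ⟨m - 2, by omega⟩
  simp only [Nat.add_sub_cancel, show k + 2 - 1 = k + 1 by omega,
    show 3 * (k + 2) - 2 = 3 * k + 4 by omega]
  ring

theorem long_wrap_general (m : ℕ) (hm : 5 ≤ m) :
    (Gmap m)^[m ^ 3 - (m - 1) * (m - 2)] ![0, 0, -1, 0, 1] = ![0, 1, 0, 0, -1] ∧
    (![0, 1, 0, 0, -1] : Fin 5 → ZMod m) ∈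
      {w : Fin 5 → ZMod m | w 0 = 0 ∧ w 3 = 0 ∧ w 4 ≠ 0} ∧
    (∀ k : ℕ, 0 < k → k < m ^ 3 - (m - 1) * (m - 2) →
      (Gmap m)^[k] ![0, 0, -1, 0, 1] ∉
        {w : Fin 5 → ZMod m | w 0 = 0 ∧ w 3 = 0 ∧ w 4 ≠ 0}) := by
  have : Fact (1 < m) := ⟨by omega⟩
  have hlen : m ^ 3 - (m - 1) * (m - 2) = 2 * m - 1 + ∑ q ∈ range (m - 1), lapLen m q + 1 := by
    rw [sum_lapLen (by omega)]
    apply Nat.sub_eq_of_eq_add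
    obtain ⟨k, rfl⟩ : ∃ k, m = k + 2 := ⟨m - 2, by omega⟩
    simp only [Nat.add_sub_cancel, show k + 2 - 1 = k + 1 by omega,
      show 2 * (k + 2) - 1 = 2 * k + 3 by omega]
    ring
  have hend : pt m 1 0 (-1) = ![0, 1, 0, 0, -1] := by
    funext i; fin_cases i <;> simp [pt]
  have h := (reachesAvoiding_prelude (m := m)).trans reachesAvoiding_laps
  rw [← Gmap_start, hend] at h
  obtain ⟨hreach, havoid⟩ := h.iterate_succ
  rw [hlen]
  exact ⟨hreach, ⟨rfl, rfl, neg_ne_zero.mpr one_ne_zero⟩, havoid⟩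

/-- **Long wrap.** For odd `m ≥ 5`, the orbit of `x⋆ = (0,0,−1,0,1)` under `G` first
returns to the section `Σ = {w : w_0 = 0, w_3 = 0, w_4 ≠ 0}` after exactly
`m³ − (m−1)(m−2)` steps, at the point `(0,1,0,0,−1)`. -/
theorem long_wrap (m : ℕ) (hm : 5 ≤ m) (hodd : Odd m) :
    (Gmap m)^[m ^ 3 - (m - 1) * (m - 2)] ![0, 0, -1, 0, 1] = ![0, 1, 0, 0, -1] ∧
    (![0, 1, 0, 0, -1] : Fin 5 → ZMod m) ∈
      {w : Fin 5 → ZMod m | w 0 = 0 ∧ w 3 = 0 ∧ w 4 ≠ 0} ∧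
    (∀ k : ℕ, 0 < k → k < m ^ 3 - (m - 1) * (m - 2) →
      (Gmap m)^[k] ![0, 0, -1, 0, 1] ∉
        {w : Fin 5 → ZMod m | w 0 = 0 ∧ w 3 = 0 ∧ w 4 ≠ 0}) :=
  long_wrap_general m hm
end

section
/- Let m = 2h+1 ≥ 5 be odd. Define ℓ : Σ → ℕ on Σ = {(a,b) ∈ (Z/m)^2 : a+b ≠ 0} by: for 0 ≤ b ≤ m−2 with s = a+b represented in {1,…,2h}, ℓ(a,b) = (h+1)m if 1 ≤ s ≤ h−1, ℓ(a,b) = 2(h+1)m if s = h, ℓ(a,b) = (3h+2)m if h+1 ≤ s ≤ 2h; and for b = m−1, ℓ(0,m−1) = m^3 − (m−1)(m−2) and ℓ(a,m−1) = m−1 for a ∉ {0,1}. Then Σ_{(a,b)∈Σ} ℓ(a,b) = m^4. -/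
/-- The first-return time table `ℓ` on `Σ = {(a,b) : a + b ≠ 0}`, for `m = 2h+1`:
for `b ≠ m−1` with `s = a+b` represented in `{1,…,2h}`, `ℓ = (h+1)m` if `s ≤ h−1`,
`ℓ = 2(h+1)m` if `s = h`, `ℓ = (3h+2)m` if `h+1 ≤ s`; for `b = m−1`,
`ℓ(0,m−1) = m³−(m−1)(m−2)` and `ℓ(a,m−1) = m−1` otherwise. -/
def retLen (h : ℕ) (p : ZMod (2 * h + 1) × ZMod (2 * h + 1)) : ℕ :=
  if p.2 = -1 then
    (if p.1 = 0 then (2 * h + 1) ^ 3 - (2 * h) * (2 * h - 1) else 2 * h)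
  else
    (if (p.1 + p.2).val ≤ h - 1 then (h + 1) * (2 * h + 1)
     else if (p.1 + p.2).val = h then 2 * (h + 1) * (2 * h + 1)
     else (3 * h + 2) * (2 * h + 1))

/-- The value of `retLen` in terms of the representative `n` of `s = a+b`, when `b ≠ -1`. -/
def vFun (h : ℕ) (n : ℕ) : ℕ :=
  if n ≤ h - 1 then (h + 1) * (2 * h + 1)
  else if n = h then 2 * (h + 1) * (2 * h + 1)
  else (3 * h + 2) * (2 * h + 1)

/-- `retLen` rewritten in the coordinates `(s, b) = (a+b, b)`. -/
def gFun (h : ℕ) (s b : ZMod (2 * h + 1)) : ℕ :=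
  if b = -1 then
    (if s = -1 then (2 * h + 1) ^ 3 - (2 * h) * (2 * h - 1) else 2 * h)
  else vFun h s.val

lemma vFun_sum (h : ℕ) (hh : 2 ≤ h) :
    ∑ n ∈ Finset.Ioc 0 (2 * h), vFun h n = (2 * h + 1) ^ 3 := by
  have h1 : (1:ℕ) ≤ h := le_trans (by norm_num) hh
  have e1 : ∑ n ∈ Finset.Ioc 0 (h - 1), vFun h n
      + ∑ n ∈ Finset.Ioc (h - 1) h, vFun h n = ∑ n ∈ Finset.Ioc 0 h, vFun h n :=
    Finset.sum_Ioc_consecutive _ (Nat.zero_le _) (Nat.sub_le _ _)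
  have e2 : ∑ n ∈ Finset.Ioc 0 h, vFun h n
      + ∑ n ∈ Finset.Ioc h (2 * h), vFun h n = ∑ n ∈ Finset.Ioc 0 (2 * h), vFun h n :=
    Finset.sum_Ioc_consecutive _ (Nat.zero_le _) (by omega)
  have s1 : ∑ n ∈ Finset.Ioc 0 (h - 1), vFun h n = (h - 1) * ((h + 1) * (2 * h + 1)) := by
    rw [Finset.sum_congr rfl (fun n hn => ?_), Finset.sum_const, smul_eq_mul,
      Nat.card_Ioc, Nat.sub_zero]
    · simp only [Finset.mem_Ioc] at hn
      unfold vFun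
      rw [if_pos hn.2]
  have s2 : Finset.Ioc (h - 1) h = {h} := by
    ext n; simp only [Finset.mem_Ioc, Finset.mem_singleton]; omega
  have s2' : ∑ n ∈ Finset.Ioc (h - 1) h, vFun h n = 2 * (h + 1) * (2 * h + 1) := by
    rw [s2, Finset.sum_singleton]
    unfold vFun
    rw [if_neg (by omega), if_pos rfl]
  have s3 : ∑ n ∈ Finset.Ioc h (2 * h), vFun h n = h * ((3 * h + 2) * (2 * h + 1)) := by
    rw [Finset.sum_congr rfl (fun n hn => ?_), Finset.sum_const, smul_eq_mul,
      Nat.card_Ioc]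
    · congr 1; omega
    · simp only [Finset.mem_Ioc] at hn
      unfold vFun
      rw [if_neg (by omega), if_neg (by omega)]
  rw [← e2, ← e1, s1, s2', s3]
  obtain ⟨k, rfl⟩ : ∃ k, h = k + 1 := ⟨h - 1, by omega⟩
  simp only [Nat.add_sub_cancel]
  ring

/-- The sum of `vFun h s.val` over nonzero `s`. -/
lemma vFun_zmod_sum (h : ℕ) (hh : 2 ≤ h) :
    ∑ s ∈ Finset.univ.filter (fun s : ZMod (2 * h + 1) => s ≠ 0), vFun h s.val
      = (2 * h + 1) ^ 3 := by
  haveI : NeZero (2 * h + 1) := ⟨by omega⟩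
  rw [← vFun_sum h hh]
  refine Finset.sum_nbij' (fun s => s.val) (fun n => (n : ZMod (2 * h + 1))) ?_ ?_ ?_ ?_ ?_
  · intro s hs
    simp only [Finset.mem_filter, Finset.mem_univ, true_and] at hs
    simp only [Finset.mem_Ioc]
    have h1 := ZMod.val_lt s
    have h2 : s.val ≠ 0 := fun hc => hs ((ZMod.val_eq_zero s).mp hc)
    omega
  · intro n hn
    simp only [Finset.mem_Ioc] at hn
    simp only [Finset.mem_filter, Finset.mem_univ, true_and]
    intro hc
    have : ((n : ZMod (2 * h + 1))).val = n := ZMod.val_cast_of_lt (by omega)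
    rw [hc, ZMod.val_zero] at this
    omega
  · intro s _; exact ZMod.natCast_rightInverse s
  · intro n hn
    simp only [Finset.mem_Ioc] at hn
    exact ZMod.val_cast_of_lt (by omega)
  · intro s _; rfl

/-- **Total excursion length.** For `m = 2h+1 ≥ 5`, the sum of the first-return times over
the section `Σ = {(a,b) : a + b ≠ 0}` equals `m⁴`. -/
theorem total_excursion_length (h : ℕ) (hh : 2 ≤ h) :
    ∑ p ∈ Finset.univ.filter
        (fun p : ZMod (2 * h + 1) × ZMod (2 * h + 1) => p.1 + p.2 ≠ 0), retLen h p
      = (2 * h + 1) ^ 4 := by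
  haveI : NeZero (2 * h + 1) := ⟨by omega⟩
  have hcard : Fintype.card (ZMod (2 * h + 1)) = 2 * h + 1 := ZMod.card _
  -- Reindex by (s, b) = (a + b, b)
  have step1 : ∑ p ∈ Finset.univ.filter
        (fun p : ZMod (2 * h + 1) × ZMod (2 * h + 1) => p.1 + p.2 ≠ 0), retLen h p
      = ∑ q ∈ Finset.univ.filter
        (fun q : ZMod (2 * h + 1) × ZMod (2 * h + 1) => q.1 ≠ 0), gFun h q.1 q.2 := by
    refine Finset.sum_nbij' (fun p => (p.1 + p.2, p.2)) (fun q => (q.1 - q.2, q.2))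
      ?_ ?_ ?_ ?_ ?_
    · intro p hp
      simpa using (by simpa using hp : p.1 + p.2 ≠ 0)
    · intro q hq
      simp only [Finset.mem_filter, Finset.mem_univ, true_and] at hq ⊢
      simpa [sub_add_cancel] using hq
    · intro p _; simp
    · intro q _; simp
    · intro p _
      unfold retLen gFun vFun
      dsimp only
      rcases eq_or_ne p.2 (-1) with hb | hb
      · rw [if_pos hb, if_pos hb]
        rcases eq_or_ne p.1 0 with ha | ha
        · rw [if_pos ha, if_pos (by rw [ha, hb]; ring)]
        · rw [if_neg ha, if_neg (fun hc => ha (by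
            have : p.1 = -1 - p.2 := by linear_combination hc
            rw [this, hb]; ring))]
      · rw [if_neg hb, if_neg hb]
  rw [step1]
  have hsplit : Finset.univ.filter
      (fun q : ZMod (2 * h + 1) × ZMod (2 * h + 1) => q.1 ≠ 0)
      = (Finset.univ.filter (fun s : ZMod (2 * h + 1) => s ≠ 0)) ×ˢ Finset.univ := by
    ext q; simp
  rw [hsplit, Finset.sum_product]
  -- inner sum over b
  have hm1 : (-1 : ZMod (2 * h + 1)) ≠ 0 := by
    intro hc
    have : ((2 * h : ℕ) : ZMod (2 * h + 1)) = -1 := by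
      have := ZMod.natCast_self (2 * h + 1)
      push_cast at this ⊢
      linear_combination this
    rw [← this] at hc
    have := ZMod.val_cast_of_lt (show 2 * h < 2 * h + 1 by omega)
    rw [hc, ZMod.val_zero] at this
    omega
  have inner : ∀ s : ZMod (2 * h + 1),
      ∑ b : ZMod (2 * h + 1), gFun h s b
        = gFun h s (-1) + (2 * h) * vFun h s.val := by
    intro s
    rw [← Finset.add_sum_erase Finset.univ (gFun h s) (Finset.mem_univ (-1))]
    have hc : ∀ b ∈ Finset.univ.erase (-1 : ZMod (2 * h + 1)),
        gFun h s b = vFun h s.val := by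
      intro b hb
      simp only [Finset.mem_erase] at hb
      unfold gFun
      rw [if_neg hb.1]
    rw [Finset.sum_congr rfl hc, Finset.sum_const, smul_eq_mul,
      Finset.card_erase_of_mem (Finset.mem_univ _), Finset.card_univ, hcard,
      Nat.add_sub_cancel]
  rw [Finset.sum_congr rfl (fun s _ => inner s), Finset.sum_add_distrib,
    ← Finset.mul_sum, vFun_zmod_sum h hh]
  -- sum of gFun h s (-1) over nonzero s
  have outer : ∑ s ∈ Finset.univ.filter (fun s : ZMod (2 * h + 1) => s ≠ 0),
      gFun h s (-1) = (2 * h + 1) ^ 3 := by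
    have hmem : (-1 : ZMod (2 * h + 1)) ∈
        Finset.univ.filter (fun s : ZMod (2 * h + 1) => s ≠ 0) :=
      Finset.mem_filter.mpr ⟨Finset.mem_univ _, hm1⟩
    have hcardf : (Finset.univ.filter (fun s : ZMod (2 * h + 1) => s ≠ 0)).card
        = 2 * h := by
      rw [Finset.filter_ne', Finset.card_erase_of_mem (Finset.mem_univ _),
        Finset.card_univ, hcard, Nat.add_sub_cancel]
    rw [← Finset.add_sum_erase _ (fun s => gFun h s (-1)) hmem]
    have hc2 : ∀ s ∈ (Finset.univ.filter
        (fun s : ZMod (2 * h + 1) => s ≠ 0)).erase (-1),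
        gFun h s (-1) = 2 * h := by
      intro s hs
      simp only [Finset.mem_erase] at hs
      unfold gFun
      rw [if_pos rfl, if_neg hs.1]
    rw [Finset.sum_congr rfl hc2, Finset.sum_const, smul_eq_mul,
      Finset.card_erase_of_mem hmem, hcardf]
    unfold gFun
    rw [if_pos rfl, if_pos rfl]
    have hle : (2 * h) * (2 * h - 1) ≤ (2 * h + 1) ^ 3 :=
      calc (2 * h) * (2 * h - 1) ≤ (2 * h + 1) ^ 2 := by
            rw [pow_two]; exact Nat.mul_le_mul (by omega) (by omega)
        _ ≤ (2 * h + 1) ^ 3 := Nat.pow_le_pow_right (by omega) (by omega)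
    have key : (2 * h - 1) * (2 * h) = 2 * h * (2 * h - 1) := by ring
    omega
  rw [outer]
  ring
end

section
/- For m = 3, the map G : A_3 → A_3 defined by G(w) = w + (0, 0, 0, 1, 1) + e_{p(Z(w))} (since −3 ≡ 0 mod 3) is a single cycle of length 81 on A_3. -/
/-- The normalized return map for `m = 3`: since `−3 ≡ 0 (mod 3)`,
`G(w) = w + (0,0,0,1,1) + e_{p(Z(w))}`. -/
def G3 (w : Fin 5 → ZMod 3) : Fin 5 → ZMod 3 :=
  w + ![0, 0, 0, 1, 1] + eVec 3 (sel (zeroSet w))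

def orb : ℕ → (Fin 5 → ZMod 3)
  | 0 => 0
  | n+1 => G3 (orb n)

set_option maxRecDepth 1000000 in
set_option maxHeartbeats 4000000 in
lemma orb_facts : (∀ w : Fin 5 → ZMod 3, (∑ i, w i) = 0 → w ∈ (List.range 81).map orb)
    ∧ orb 81 = orb 0 ∧ orb 27 ≠ orb 0 := by decide

set_option maxRecDepth 10000 in
lemma G3_sum : ∀ w : Fin 5 → ZMod 3, (∑ i, w i) = 0 → ∑ i, G3 w i = 0 := by decide

lemma orb_eq (n : ℕ) : orb n = G3^[n] (0 : Fin 5 → ZMod 3) := by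
  induction n with
  | zero => rfl
  | succ n ih => rw [Function.iterate_succ_apply', ← ih]; rfl

lemma orbit_cover (w : Fin 5 → ZMod 3) (hw : (∑ i, w i) = 0) :
    ∃ k < 81, G3^[k] (0 : Fin 5 → ZMod 3) = w := by
  have := orb_facts.1 w hw
  rw [List.mem_map] at this
  obtain ⟨k, hk, hkw⟩ := this
  exact ⟨k, List.mem_range.mp hk, by rw [← orb_eq, hkw]⟩

lemma G81_zero : G3^[81] (0 : Fin 5 → ZMod 3) = 0 := by
  have := orb_facts.2.1
  rwa [orb_eq, orb_eq] at this

lemma G27_zero : G3^[27] (0 : Fin 5 → ZMod 3) ≠ 0 := by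
  have := orb_facts.2.2
  rwa [orb_eq, orb_eq] at this

lemma G81 (w : Fin 5 → ZMod 3) (hw : (∑ i, w i) = 0) : G3^[81] w = w := by
  obtain ⟨k, _, rfl⟩ := orbit_cover w hw
  rw [← Function.iterate_add_apply, Nat.add_comm, Function.iterate_add_apply, G81_zero]

set_option maxRecDepth 10000 in
lemma G27 (w : Fin 5 → ZMod 3) (hw : (∑ i, w i) = 0) : G3^[27] w ≠ w := by
  obtain ⟨k, hk, rfl⟩ := orbit_cover w hw
  intro h
  apply G27_zero
  have h2 : G3^[81 - k] (G3^[27] (G3^[k] 0)) = G3^[81 - k] (G3^[k] 0) := by rw [h]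
  rw [← Function.iterate_add_apply, ← Function.iterate_add_apply,
    ← Function.iterate_add_apply] at h2
  have e1 : 81 - k + 27 + k = 27 + 81 := by omega
  have e2 : 81 - k + k = 81 := by omega
  rw [e1, e2, Function.iterate_add_apply, G81_zero] at h2
  exact h2

lemma Gn_sum (n : ℕ) (w : Fin 5 → ZMod 3) (hw : (∑ i, w i) = 0) :
    ∑ i, G3^[n] w i = 0 := by
  induction n with
  | zero => simpa
  | succ n ih => rw [Function.iterate_succ_apply']; exact G3_sum _ ih

/-- **The `m = 3` certificate.** `G` is a single cycle of length `81` on `A_3`. -/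
theorem G3_single_cycle :
    Set.BijOn G3 {w : Fin 5 → ZMod 3 | ∑ i, w i = 0}
      {w : Fin 5 → ZMod 3 | ∑ i, w i = 0} ∧
    (∀ w : Fin 5 → ZMod 3, (∑ i, w i) = 0 → Function.minimalPeriod G3 w = 81) ∧
    (∀ w w' : Fin 5 → ZMod 3, (∑ i, w i) = 0 → (∑ i, w' i) = 0 →
        ∃ k : ℕ, G3^[k] w = w') := by
  refine ⟨⟨fun w hw => G3_sum w hw, fun w hw w' hw' h => ?_, fun w hw => ?_⟩,
    fun w hw => ?_, fun w w' hw hw' => ?_⟩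
  · -- InjOn
    have h2 : G3^[80] (G3 w) = G3^[80] (G3 w') := by rw [h]
    rwa [← Function.iterate_succ_apply, ← Function.iterate_succ_apply,
      G81 w hw, G81 w' hw'] at h2
  · -- SurjOn
    refine ⟨G3^[80] w, Gn_sum 80 w hw, ?_⟩
    have := G81 w hw
    rwa [show (81 : ℕ) = 80 + 1 from rfl, Function.iterate_add_apply,
      Function.iterate_one] at this
  · -- minimalPeriod
    have hper : Function.IsPeriodicPt G3 81 w := G81 w hw
    have hdvd : Function.minimalPeriod G3 w ∣ 81 := hper.minimalPeriod_dvd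
    by_contra hne
    have h27 : Function.minimalPeriod G3 w ∣ 27 := by
      have hdvd' : Function.minimalPeriod G3 w ∣ 3 ^ 4 := by
        rw [show (3:ℕ)^4 = 81 by norm_num]; exact hdvd
      obtain ⟨i, hi, hd⟩ := (Nat.dvd_prime_pow (by norm_num : Nat.Prime 3)).mp hdvd'
      have hi3 : i ≤ 3 := by
        rcases Nat.lt_or_ge i 4 with h | h
        · omega
        · exfalso; apply hne; rw [hd]; interval_cases i <;> norm_num
      rw [hd]
      calc (3:ℕ)^i ∣ 3^3 := pow_dvd_pow 3 hi3
        _ = 27 := by norm_num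
    have : Function.IsPeriodicPt G3 27 w := by
      obtain ⟨c, hc⟩ := h27
      rw [hc]
      exact (Function.isPeriodicPt_minimalPeriod G3 w).mul_const c
    exact G27 w hw this
  · -- transitivity
    obtain ⟨k, hk, rfl⟩ := orbit_cover w hw
    obtain ⟨k', hk', rfl⟩ := orbit_cover w' hw'
    refine ⟨81 + k' - k, ?_⟩
    rw [← Function.iterate_add_apply]
    have e : 81 + k' - k + k = k' + 81 := by omega
    rw [e, Function.iterate_add_apply, G81_zero]
end
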